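/- arXiv:2202.02017 — 10 statements merged into one kernel-verified Lean document; each statement's English description precedes it below -/
import Mathlib

section
/- Let N be a nonempty finite set of nodes and E : N → N → Prop a decidable edge relation such that every node has at least one out-neighbour and the relation is strongly connected (for all nodes a, b, there is a directed E-path from a to b). Let f₁, …, f_{|N|} > 0 and f = diag(f₁, …, f_{|N|}). For θ : N × N → ℝ define the softmax policy π(θ) by π(θ)_{n,i} = exp(θ_{n,i}) / Σ_{j : E n j} exp(θ_{n,j}) if E n i holds and π(θ)_{n,i} = 0 otherwise, and define M(θ) = f · (π(θ) − Id)ᵀ. Then any function μ : (N × N → ℝ) → ℝ^N such that, for every θ, μ(θ) is entrywise positive, its coordinates sum to 1, and M(θ)·μ(θ) = 0, is differentiable (as a map between the finite-dimensional real vector spaces N × N → ℝ and ℝ^N). -/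
open Matrix Finset

attribute [local instance] Matrix.normedAddCommGroup Matrix.normedSpace

variable {N : Type*} [Fintype N] [DecidableEq N]

/-- The softmax policy associated to a parameter `θ`: row `n` is the softmax of
`θ (n, ·)` over the out-neighbours of `n`, and vanishes outside them. -/
noncomputable def softmaxPolicy (Edge : N → N → Prop) [DecidableRel Edge]
    (θ : N × N → ℝ) : Matrix N N ℝ :=
  Matrix.of fun a b =>
    if Edge a b then
      Real.exp (θ (a, b)) / ∑ j ∈ Finset.univ.filter (fun j => Edge a j), Real.exp (θ (a, j))
    else 0

/-- The parameterised diffusion matrix `M(θ) = f ⬝ (π(θ) - Id)ᵀ`. -/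
noncomputable def Mdiff (Edge : N → N → Prop) [DecidableRel Edge]
    (f : N → ℝ) (θ : N × N → ℝ) : Matrix N N ℝ :=
  Matrix.diagonal f * (softmaxPolicy Edge θ - 1)ᵀ

section Aux

variable (Edge : N → N → Prop) [DecidableRel Edge]

lemma softmax_nonneg (θ : N × N → ℝ) (a b : N) : 0 ≤ softmaxPolicy Edge θ a b := by
  unfold softmaxPolicy
  simp only [Matrix.of_apply]
  split
  · exact div_nonneg (Real.exp_pos _).le (Finset.sum_nonneg fun j _ => (Real.exp_pos _).le)
  · exact le_rfl

lemma softmax_denom_pos (hout : ∀ a, ∃ b, Edge a b) (θ : N × N → ℝ) (a : N) :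
    0 < ∑ j ∈ Finset.univ.filter (fun j => Edge a j), Real.exp (θ (a, j)) := by
  obtain ⟨b, hb⟩ := hout a
  exact Finset.sum_pos (fun j _ => Real.exp_pos _)
    ⟨b, Finset.mem_filter.2 ⟨Finset.mem_univ _, hb⟩⟩

lemma softmax_pos (hout : ∀ a, ∃ b, Edge a b) (θ : N × N → ℝ) {a b : N} (h : Edge a b) :
    0 < softmaxPolicy Edge θ a b := by
  unfold softmaxPolicy
  simp only [Matrix.of_apply, if_pos h]
  exact div_pos (Real.exp_pos _) (softmax_denom_pos Edge hout θ a)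

lemma softmax_row_sum (hout : ∀ a, ∃ b, Edge a b) (θ : N × N → ℝ) (a : N) :
    ∑ b, softmaxPolicy Edge θ a b = 1 := by
  unfold softmaxPolicy
  simp only [Matrix.of_apply]
  rw [← Finset.sum_filter, ← Finset.sum_div]
  exact div_self (softmax_denom_pos Edge hout θ a).ne'

/-- Kernel of `πᵀ - 1` is spanned by a positive stationary vector. -/
lemma softmax_ker [Nonempty N] (hout : ∀ a, ∃ b, Edge a b)
    (hconn : ∀ a b, Relation.ReflTransGen Edge a b) (θ : N × N → ℝ)
    (μv : N → ℝ) (hpos : ∀ i, 0 < μv i)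
    (hstat : (softmaxPolicy Edge θ)ᵀ *ᵥ μv = μv)
    (x : N → ℝ) (hx : (softmaxPolicy Edge θ)ᵀ *ᵥ x = x) :
    ∃ c : ℝ, x = c • μv := by
  classical
  have hNe : (Finset.univ : Finset N).Nonempty := Finset.univ_nonempty
  obtain ⟨i0, -, hmin⟩ := Finset.exists_min_image Finset.univ (fun i => x i / μv i) hNe
  set t : ℝ := x i0 / μv i0 with ht
  set y : N → ℝ := x - t • μv with hy
  refine ⟨t, ?_⟩
  have hy0 : ∀ i, 0 ≤ y i := by
    intro i
    have h1 : t ≤ x i / μv i := hmin i (Finset.mem_univ i)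
    have := (le_div_iff₀ (hpos i)).mp h1
    simp only [hy, Pi.sub_apply, Pi.smul_apply, smul_eq_mul]
    linarith
  have hfix : (softmaxPolicy Edge θ)ᵀ *ᵥ y = y := by
    rw [hy, Matrix.mulVec_sub, Matrix.mulVec_smul, hstat, hx]
  have hyi0 : y i0 = 0 := by
    simp only [hy, Pi.sub_apply, Pi.smul_apply, smul_eq_mul, ht]
    rw [div_mul_cancel₀ _ (hpos i0).ne']
    ring
  have hzero : ∀ a, y a = 0 := by
    intro a
    have hpath := hconn a i0
    induction hpath using Relation.ReflTransGen.head_induction_on with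
    | refl => exact hyi0
    | head hac hcb ih =>
      rename_i a' c
      have hc : ((softmaxPolicy Edge θ)ᵀ *ᵥ y) c = 0 := by rw [hfix]; exact ih
      have hsum : ∑ j, softmaxPolicy Edge θ j c * y j = 0 := by
        simpa [Matrix.mulVec, dotProduct, Matrix.transpose_apply] using hc
      have hterm : softmaxPolicy Edge θ a' c * y a' = 0 := by
        have hnn : ∀ j ∈ Finset.univ, 0 ≤ softmaxPolicy Edge θ j c * y j :=
          fun j _ => mul_nonneg (softmax_nonneg Edge θ j c) (hy0 j)
        exact (Finset.sum_eq_zero_iff_of_nonneg hnn).mp hsum a' (Finset.mem_univ a')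
      rcases mul_eq_zero.mp hterm with h | h
      · exact absurd h (softmax_pos Edge hout θ hac).ne'
      · exact h
  funext i
  have := hzero i
  simp only [hy, Pi.sub_apply, Pi.smul_apply, smul_eq_mul] at this
  simp only [Pi.smul_apply, smul_eq_mul]
  linarith

/-- The rank-one corrected matrix. -/
noncomputable def Cmat (θ : N × N → ℝ) : Matrix N N ℝ :=
  (softmaxPolicy Edge θ)ᵀ - 1 + Matrix.of (fun _ _ => (1 : ℝ))

lemma Cmat_mulVec (θ : N × N → ℝ) (v : N → ℝ) (i : N) :
    (Cmat Edge θ *ᵥ v) i = ((softmaxPolicy Edge θ)ᵀ *ᵥ v) i - v i + ∑ j, v j := by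
  rw [Cmat, Matrix.add_mulVec, Matrix.sub_mulVec, Matrix.one_mulVec]
  simp [Matrix.mulVec, dotProduct]

lemma Cmat_isUnit [Nonempty N] (hout : ∀ a, ∃ b, Edge a b)
    (hconn : ∀ a b, Relation.ReflTransGen Edge a b) (θ : N × N → ℝ)
    (μv : N → ℝ) (hpos : ∀ i, 0 < μv i) (hsum : ∑ i, μv i = 1)
    (hstat : (softmaxPolicy Edge θ)ᵀ *ᵥ μv = μv) :
    IsUnit (Cmat Edge θ) := by
  classical
  rw [← Matrix.mulVec_injective_iff_isUnit]
  have hker : ∀ x : N → ℝ, Cmat Edge θ *ᵥ x = 0 → x = 0 := by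
    intro x hCx
    have hcoord : ∀ i, ((softmaxPolicy Edge θ)ᵀ *ᵥ x) i - x i + ∑ j, x j = 0 := by
      intro i
      have := congrFun hCx i
      rw [Cmat_mulVec] at this
      simpa using this
    -- sum the coordinate equations
    have hsum0 : (Fintype.card N : ℝ) * (∑ j, x j) = 0 := by
      have h1 : ∑ i, (((softmaxPolicy Edge θ)ᵀ *ᵥ x) i - x i + ∑ j, x j) = 0 :=
        Finset.sum_eq_zero fun i _ => hcoord i
      have h2 : ∑ i, ((softmaxPolicy Edge θ)ᵀ *ᵥ x) i = ∑ j, x j := by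
        simp only [Matrix.mulVec, dotProduct, Matrix.transpose_apply]
        rw [Finset.sum_comm]
        refine Finset.sum_congr rfl fun j _ => ?_
        rw [← Finset.sum_mul, softmax_row_sum Edge hout θ j, one_mul]
      rw [Finset.sum_add_distrib, Finset.sum_sub_distrib, h2, Finset.sum_const,
        Finset.card_univ, nsmul_eq_mul] at h1
      linarith
    have hxsum : ∑ j, x j = 0 := by
      have hcard : (0 : ℝ) < (Fintype.card N : ℝ) := by
        exact_mod_cast Fintype.card_pos
      exact (mul_eq_zero.mp hsum0).resolve_left hcard.ne'
    have hfix : (softmaxPolicy Edge θ)ᵀ *ᵥ x = x := by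
      funext i
      have := hcoord i
      rw [hxsum] at this
      linarith
    obtain ⟨c, hc⟩ := softmax_ker Edge hout hconn θ μv hpos hstat x hfix
    have : c = 0 := by
      have := hxsum
      rw [hc] at this
      simp only [Pi.smul_apply, smul_eq_mul, ← Finset.mul_sum, hsum, mul_one] at this
      exact this
    rw [hc, this, zero_smul]
  intro x x' hxx'
  have : Cmat Edge θ *ᵥ (x - x') = 0 := by
    rw [Matrix.mulVec_sub, hxx', sub_self]
  have := hker _ this
  exact sub_eq_zero.mp this

/-- Products of differentiable functions are differentiable. -/
lemma diff_finset_prod {E : Type*} [NormedAddCommGroup E] [NormedSpace ℝ E]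
    {ι : Type*} (s : Finset ι) (g : ι → E → ℝ)
    (hg : ∀ i ∈ s, Differentiable ℝ (g i)) :
    Differentiable ℝ (fun x => ∏ i ∈ s, g i x) := by
  classical
  induction s using Finset.induction_on with
  | empty => simp only [Finset.prod_empty]; exact differentiable_const 1
  | @insert a s' hn ih =>
    simp only [Finset.prod_insert hn]
    exact Differentiable.mul (hg a (Finset.mem_insert_self a s'))
      (ih fun i hi => hg i (Finset.mem_insert_of_mem hi))

/-- Determinant of a matrix with differentiable entries is differentiable. -/
lemma diff_det {E : Type*} [NormedAddCommGroup E] [NormedSpace ℝ E]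
    (A : E → Matrix N N ℝ) (hA : ∀ a b, Differentiable ℝ fun x => A x a b) :
    Differentiable ℝ (fun x => (A x).det) := by
  classical
  have : (fun x => (A x).det) =
      fun x => ∑ σ : Equiv.Perm N, (Equiv.Perm.sign σ : ℝ) * ∏ i, A x (σ i) i := by
    funext x
    rw [Matrix.det_apply']
  rw [this]
  exact Differentiable.fun_sum fun σ _ =>
    ((diff_finset_prod Finset.univ _ fun i _ => hA (σ i) i).const_mul _)

lemma diff_Cmat_entry (hout : ∀ a, ∃ b, Edge a b) (a b : N) :
    Differentiable ℝ (fun θ : N × N → ℝ => Cmat Edge θ a b) := by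
  have hs : Differentiable ℝ (fun θ : N × N → ℝ => softmaxPolicy Edge θ b a) := by
    unfold softmaxPolicy
    simp only [Matrix.of_apply]
    by_cases h : Edge b a
    · simp only [if_pos h]
      simp only [div_eq_mul_inv]
      refine Differentiable.mul ?_ (Differentiable.inv ?_ ?_)
      · exact (Real.differentiable_exp).comp (differentiable_apply (b, a))
      · exact Differentiable.fun_sum fun j _ =>
          (Real.differentiable_exp).comp (differentiable_apply (b, j))
      · intro θ
        exact (softmax_denom_pos Edge hout θ b).ne'
    · simp only [if_neg h]
      exact differentiable_const 0
  have : (fun θ : N × N → ℝ => Cmat Edge θ a b) =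
      fun θ => softmaxPolicy Edge θ b a - (1 : Matrix N N ℝ) a b + 1 := by
    funext θ
    simp [Cmat, Matrix.transpose_apply]
  rw [this]
  exact (hs.sub_const _).add_const _

end Aux

/-- differentiability of the stationary distribution: for a strongly
connected decidable edge relation in which every node has an out-neighbour, positive
outrates `f`, and the softmax-parameterised diffusion `M(θ) = f (π(θ) - Id)ᵀ`, any map `μ`
assigning to each `θ` a stationary distribution of `M(θ)` is differentiable. -/
theorem stationary_distribution_differentiable
    {N : Type*} [Fintype N] [DecidableEq N] [Nonempty N]
    (Edge : N → N → Prop) [DecidableRel Edge]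
    (hout : ∀ a, ∃ b, Edge a b)
    (hconn : ∀ a b, Relation.ReflTransGen Edge a b)
    (f : N → ℝ) (hf : ∀ i, 0 < f i)
    (μ : (N × N → ℝ) → N → ℝ)
    (hμ : ∀ θ, (∀ i, 0 < μ θ i) ∧ (∑ i, μ θ i = 1) ∧
      (Mdiff Edge f θ).mulVec (μ θ) = 0) :
    Differentiable ℝ μ := by
  classical
  -- stationarity with respect to the softmax matrix
  have hstat : ∀ θ, (softmaxPolicy Edge θ)ᵀ *ᵥ μ θ = μ θ := by
    intro θ
    have h0 := (hμ θ).2.2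
    have h1 : ∀ i, (((softmaxPolicy Edge θ - 1)ᵀ) *ᵥ μ θ) i = 0 := by
      intro i
      have h2 : (Matrix.diagonal f *ᵥ ((softmaxPolicy Edge θ - 1)ᵀ *ᵥ μ θ)) i = 0 := by
        rw [Matrix.mulVec_mulVec]
        exact congrFun h0 i
      rw [Matrix.mulVec_diagonal] at h2
      exact (mul_eq_zero.mp h2).resolve_left (hf i).ne'
    funext i
    have := h1 i
    rw [Matrix.transpose_sub, Matrix.transpose_one, Matrix.sub_mulVec] at this
    have := sub_eq_zero.mp this
    rw [this, Matrix.one_mulVec]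
  have hCμ : ∀ θ, Cmat Edge θ *ᵥ μ θ = fun _ => (1 : ℝ) := by
    intro θ
    funext i
    rw [Cmat_mulVec, hstat θ]
    simp [(hμ θ).2.1]
  have hUnit : ∀ θ, IsUnit (Cmat Edge θ) :=
    fun θ => Cmat_isUnit Edge hout hconn θ (μ θ) (hμ θ).1 (hμ θ).2.1 (hstat θ)
  have hdet : ∀ θ, (Cmat Edge θ).det ≠ 0 := by
    intro θ
    have := (Matrix.isUnit_iff_isUnit_det _).mp (hUnit θ)
    exact this.ne_zero
  -- Cramer-style formula for μ
  have hform : ∀ θ i, μ θ i =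
      (∑ j, (Cmat Edge θ).adjugate i j) / (Cmat Edge θ).det := by
    intro θ i
    have h1 : (Cmat Edge θ).adjugate *ᵥ (Cmat Edge θ *ᵥ μ θ) =
        (Cmat Edge θ).det • μ θ := by
      rw [Matrix.mulVec_mulVec, Matrix.adjugate_mul, Matrix.smul_mulVec,
        Matrix.one_mulVec]
    rw [hCμ θ] at h1
    have h2 := congrFun h1 i
    simp only [Matrix.mulVec, dotProduct, mul_one, Pi.smul_apply, smul_eq_mul] at h2
    rw [eq_div_iff (hdet θ)]
    linarith
  -- differentiability
  rw [differentiable_pi]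
  intro i
  have hform' : (fun θ => μ θ i) =
      fun θ => (∑ j, (Cmat Edge θ).adjugate i j) / (Cmat Edge θ).det := by
    funext θ; exact hform θ i
  rw [hform']
  simp only [div_eq_mul_inv]
  have hentry := diff_Cmat_entry Edge hout
  have hdetdiff : Differentiable ℝ (fun θ : N × N → ℝ => (Cmat Edge θ).det) :=
    diff_det (fun θ => Cmat Edge θ) hentry
  have hnum : Differentiable ℝ (fun θ : N × N → ℝ => ∑ j, (Cmat Edge θ).adjugate i j) := by
    refine Differentiable.fun_sum fun j _ => ?_
    have heq : (fun θ : N × N → ℝ => (Cmat Edge θ).adjugate i j) =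
        fun θ => ((Cmat Edge θ).updateRow j (Pi.single i 1)).det := by
      funext θ; rw [Matrix.adjugate_apply]
    rw [heq]
    refine diff_det (fun θ : N × N → ℝ => (Cmat Edge θ).updateRow j (Pi.single i 1))
      fun a b => ?_
    by_cases hab : a = j
    · subst hab
      simp only [Matrix.updateRow_self]
      exact differentiable_const _
    · simp only [Matrix.updateRow_ne hab]
      exact hentry a b
  exact hnum.mul (hdetdiff.inv hdet)
end

section
/- Let Q be an n×n real matrix all of whose complex eigenvalues have strictly negative real part. Then there exists a symmetric positive definite n×n real matrix P such that P·Q + Qᵀ·P = −Id. -/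
/-!
The solution is the Gramian `P = ∫₀^∞ exp(tQᵀ) exp(tQ) dt`. A common eigenvector of `Q` and
`exp Q` shows that every eigenvalue of `exp Q` is `e^z` for an eigenvalue `z` of `Q`, so the
spectral radius of `exp Q` is `< 1`, and Gelfand's formula makes `exp(tQ)` decay exponentially.
The integral therefore converges; it is positive definite because each `exp(tQ)ᵀ exp(tQ)` is, and
since the integrand has derivative `Qᵀ F + F Q` and tends to `0`, integrating gives
`Qᵀ P + P Q = 0 - F 0 = -1`.
-/

open NormedSpace Filter Asymptotics MeasureTheory Set Topology
open scoped NNReal Matrix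

attribute [local instance] Matrix.linftyOpNormedAddCommGroup Matrix.linftyOpNormedSpace
  Matrix.linftyOpNormedRing Matrix.linftyOpNormedAlgebra

/- Instance search does not identify the default (product) topology on `Matrix` with the topology
of the norm, so without this instance matrix-valued functions could not be integrated. -/
noncomputable local instance Matrix.linftyOpTopologicalSpace {m n α : Type*} [Fintype m]
    [Fintype n] [NormedAddCommGroup α] : TopologicalSpace (Matrix m n α) :=
  Matrix.linftyOpNormedAddCommGroup.toUniformSpace.toTopologicalSpace

theorem spectrum.isBigO_pow_of_spectralRadius_lt {A : Type*} [NormedRing A] [NormedAlgebra ℂ A]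
    [CompleteSpace A] (a : A) {r : ℝ≥0} (h : spectralRadius ℂ a < r) :
    (fun m : ℕ => a ^ m) =O[atTop] fun m => (r : ℝ) ^ m := by
  refine IsBigO.of_bound' ?_
  filter_upwards [(gelfand_formula a).eventually_lt_const h, eventually_gt_atTop 0]
    with m hm hm0
  rw [one_div, ENNReal.rpow_inv_lt_iff (by positivity), ENNReal.rpow_natCast,
    ← ENNReal.coe_pow, ENNReal.coe_lt_coe, ← NNReal.coe_lt_coe] at hm
  simpa using hm.le

section RealBanachAlgebra

variable {𝔸 : Type*} [NormedRing 𝔸] [NormedAlgebra ℝ 𝔸] [CompleteSpace 𝔸]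

theorem exp_smul_eq_exp_pow_floor_mul (a : 𝔸) (t : ℝ) :
    exp (t • a) = exp a ^ ⌊t⌋₊ * exp ((t - ⌊t⌋₊) • a) := by
  -- `exp` does not depend on the scalars; this structure only serves the library lemmas.
  let : NormedAlgebra ℚ 𝔸 := NormedAlgebra.restrictScalars ℚ ℝ 𝔸
  rw [← NormedSpace.exp_nsmul, ← Nat.cast_smul_eq_nsmul ℝ, ← exp_add_of_commute
    (((Commute.refl a).smul_left _).smul_right _), ← add_smul, add_sub_cancel]

theorem isBigO_exp_smul_of_isBigO_exp_pow {a : 𝔸} {c : ℝ}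
    (h : (fun m : ℕ => exp a ^ m) =O[atTop] fun m => Real.exp (-c * m)) :
    (fun t : ℝ => exp (t • a)) =O[atTop] fun t => Real.exp (-c * t) := by
  have hcont : Continuous fun s : ℝ => exp (s • a) :=
    continuous_iff_continuousAt.2 fun s => (hasDerivAt_exp_smul_const a s).continuousAt
  obtain ⟨K, hK⟩ := (isCompact_Icc (a := (0 : ℝ)) (b := 1)).exists_bound_of_continuousOn
    hcont.continuousOn
  have hfloor : (fun t : ℝ => exp a ^ ⌊t⌋₊) =O[atTop] fun t => Real.exp (-c * t) := by
    refine (h.comp_tendsto tendsto_nat_floor_atTop).trans (IsBigO.of_bound (Real.exp |c|) ?_)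
    filter_upwards [eventually_ge_atTop 0] with t ht
    simp only [Function.comp_apply, Real.norm_eq_abs, Real.abs_exp, ← Real.exp_add]
    gcongr
    nlinarith [le_abs_self c, neg_abs_le c, Nat.floor_le ht, Nat.lt_floor_add_one t]
  have hfract : (fun t : ℝ => exp ((t - ⌊t⌋₊) • a)) =O[atTop] fun _ => (1 : ℝ) := by
    refine IsBigO.of_bound K ?_
    filter_upwards [eventually_ge_atTop 0] with t ht
    simpa using hK (t - ⌊t⌋₊)
      ⟨by linarith [Nat.floor_le ht], by linarith [Nat.lt_floor_add_one t]⟩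
  have := hfloor.mul hfract
  simp only [mul_one] at this
  exact this.congr_left fun t => (exp_smul_eq_exp_pow_floor_mul a t).symm

theorem mul_integral_exp_mul_exp_add_integral_mul_eq_neg_one {a b : 𝔸}
    (hint : IntegrableOn (fun t : ℝ => exp (t • b) * exp (t • a)) (Ioi 0))
    (hlim : Tendsto (fun t : ℝ => exp (t • b) * exp (t • a)) atTop (𝓝 0)) :
    b * (∫ t in Ioi (0 : ℝ), exp (t • b) * exp (t • a)) +
      (∫ t in Ioi (0 : ℝ), exp (t • b) * exp (t • a)) * a = -1 := by
  set F := fun t : ℝ => exp (t • b) * exp (t • a)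
  have hderiv (t : ℝ) : HasDerivAt F (b * F t + F t * a) t := by
    convert (hasDerivAt_exp_smul_const' b t).mul (hasDerivAt_exp_smul_const a t) using 1
    · rfl
    · simp only [F, mul_assoc]
  let L : 𝔸 →L[ℝ] 𝔸 := ContinuousLinearMap.mul ℝ 𝔸 b + (ContinuousLinearMap.mul ℝ 𝔸).flip a
  calc b * (∫ t in Ioi (0 : ℝ), F t) + (∫ t in Ioi (0 : ℝ), F t) * a
      = ∫ t in Ioi (0 : ℝ), L (F t) := (L.integral_comp_comm hint).symm
    _ = 0 - F 0 := integral_Ioi_of_hasDerivAt_of_tendsto' (fun t _ => hderiv t)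
        (L.integrable_comp hint) hlim
    _ = -1 := by simp [F]

end RealBanachAlgebra

theorem integrableOn_Ioi_of_isBigO_exp_neg {E : Type*} [NormedAddCommGroup E] {f : ℝ → E}
    {c : ℝ} (hf : Continuous f) (hc : 0 < c) (h : f =O[atTop] fun t => Real.exp (-c * t))
    (a : ℝ) : IntegrableOn f (Ioi a) :=
  ((hf.locallyIntegrable.locallyIntegrableOn _).integrableOn_of_isBigO_atTop h
    ⟨Ioi a, Ioi_mem_atTop a, exp_neg_integrableOn_Ioi a hc⟩).mono_set Ioi_subset_Ici_self

theorem Module.End.exists_hasEigenvector_of_commute {K V : Type*} [Field K] [IsAlgClosed K]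
    [AddCommGroup V] [Module K V] [FiniteDimensional K V] {f g : Module.End K V}
    (hfg : Commute f g) {μ : K} (hμ : g.HasEigenvalue μ) :
    ∃ z v, f.HasEigenvector z v ∧ g.HasEigenvector μ v := by
  have hmaps : ∀ v ∈ g.eigenspace μ, f v ∈ g.eigenspace μ := fun v hv =>
    Module.End.mapsTo_genEigenspace_of_comm hfg.symm μ 1 hv
  have : Nontrivial (g.eigenspace μ) := Submodule.nontrivial_iff_ne_bot.2 hμ
  obtain ⟨z, hz⟩ := Module.End.exists_eigenvalue (f.restrict hmaps)
  obtain ⟨w, hw⟩ := hz.exists_hasEigenvector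
  refine ⟨z, w, ⟨Module.End.eigenspace_restrict_le_eigenspace f hmaps z ⟨w, hw.1, rfl⟩, ?_⟩,
    ⟨w.2, ?_⟩⟩ <;> exact_mod_cast hw.2

section Matrix

variable {n : Type*} [Fintype n] [DecidableEq n]

theorem Matrix.exp_mulVec_of_mulVec_eq_smul {A : Matrix n n ℂ} {v : n → ℂ} {z : ℂ}
    (h : A *ᵥ v = z • v) : exp A *ᵥ v = Complex.exp z • v := by
  have hpow (k : ℕ) : A ^ k *ᵥ v = z ^ k • v := by
    induction k with
    | zero => simp
    | succ k ih => rw [pow_succ', ← Matrix.mulVec_mulVec, ih, Matrix.mulVec_smul, h, smul_smul,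
        ← pow_succ]
  let L : Matrix n n ℂ →L[ℂ] n → ℂ :=
    LinearMap.toContinuousLinearMap ((Matrix.mulVecBilin ℂ ℂ).flip v)
  have hA := (exp_series_hasSum_exp' (𝕂 := ℂ) A).mapL L
  have hz := (exp_series_hasSum_exp' (𝕂 := ℂ) z).smul_const v
  rw [← Complex.exp_eq_exp_ℂ] at hz
  refine hA.unique (hz.congr_fun fun k => ?_)
  simp [L, hpow, smul_smul]

theorem Matrix.exists_exp_eq_of_mem_spectrum_exp {A : Matrix n n ℂ} {μ : ℂ}
    (hμ : μ ∈ spectrum ℂ (exp A)) : ∃ z ∈ spectrum ℂ A, Complex.exp z = μ := by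
  rw [← Matrix.spectrum_toLin', ← Module.End.hasEigenvalue_iff_mem_spectrum] at hμ
  obtain ⟨z, v, hAv, hexpv⟩ := Module.End.exists_hasEigenvector_of_commute
    ((Commute.exp_right (Commute.refl A)).map Matrix.toLinAlgEquiv') hμ
  refine ⟨z, ?_, smul_left_injective ℂ hexpv.2 ?_⟩
  · rw [← Matrix.spectrum_toLin', ← Module.End.hasEigenvalue_iff_mem_spectrum]
    exact Module.End.hasEigenvalue_of_hasEigenvector hAv
  · simpa [← Matrix.exp_mulVec_of_mulVec_eq_smul hAv.apply_eq_smul] using hexpv.apply_eq_smul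

theorem Matrix.spectralRadius_exp_lt_one {A : Matrix n n ℂ}
    (hA : ∀ z ∈ spectrum ℂ A, z.re < 0) : spectralRadius ℂ (exp A) < 1 := by
  cases subsingleton_or_nontrivial (Matrix n n ℂ) with
  | inl _ => simp [Subsingleton.elim (exp A) 0]
  | inr _ =>
    refine spectrum.spectralRadius_lt_of_forall_lt _ fun μ hμ => ?_
    obtain ⟨z, hz, rfl⟩ := Matrix.exists_exp_eq_of_mem_spectrum_exp hμ
    rw [← NNReal.coe_lt_coe, coe_nnnorm, Complex.norm_exp]
    simpa using hA z hz

theorem Matrix.exists_isBigO_exp_smul_of_re_lt_zero (Q : Matrix n n ℝ)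
    (hQ : ∀ z ∈ spectrum ℂ (Q.map (algebraMap ℝ ℂ)), z.re < 0) :
    ∃ c > 0, (fun t : ℝ => exp (t • Q)) =O[atTop] fun t => Real.exp (-c * t) := by
  obtain ⟨r, hr, hr1⟩ := ENNReal.lt_iff_exists_nnreal_btwn.1 (Matrix.spectralRadius_exp_lt_one hQ)
  have hr0 : 0 < (r : ℝ) := NNReal.coe_pos.2 (ENNReal.coe_pos.1 (pos_of_gt hr))
  have hr1' : (r : ℝ) < 1 := by exact_mod_cast hr1
  have hexp : (exp Q).map (algebraMap ℝ ℂ) = exp (Q.map (algebraMap ℝ ℂ)) :=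
    map_exp (algebraMap ℝ ℂ).mapMatrix (continuous_id.matrix_map Complex.continuous_ofReal) Q
  let re : Matrix n n ℂ →L[ℝ] Matrix n n ℝ :=
    LinearMap.toContinuousLinearMap Complex.reLm.mapMatrix
  have hpow : (fun m : ℕ => exp Q ^ m) =O[atTop] fun m => (r : ℝ) ^ m := by
    refine ((re.isBigO_comp _ _).trans (spectrum.isBigO_pow_of_spectralRadius_lt _ hr)).congr_left
      fun m => ?_
    rw [← hexp, ← RingHom.mapMatrix_apply, ← map_pow]
    rfl
  refine ⟨-Real.log r, neg_pos.2 (Real.log_neg hr0 hr1'), isBigO_exp_smul_of_isBigO_exp_pow ?_⟩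
  simpa only [neg_neg, mul_comm (Real.log r), Real.exp_nat_mul, Real.exp_log hr0] using hpow

end Matrix

theorem Matrix.PosDef.integral {n α : Type*} [Fintype n] [MeasurableSpace α] {μ : Measure α}
    {f : α → Matrix n n ℝ} (hf : Integrable f μ) (hpos : ∀ x, (f x).PosDef) (hμ : μ ≠ 0) :
    (∫ x, f x ∂μ).PosDef := by
  refine .of_dotProduct_mulVec_pos ?_ fun v hv => ?_
  · let T : Matrix n n ℝ →L[ℝ] Matrix n n ℝ :=
      LinearMap.toContinuousLinearMap (Matrix.transposeLinearEquiv n n ℝ ℝ).toLinearMap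
    rw [Matrix.isHermitian_iff_isSymm, Matrix.IsSymm]
    refine (T.integral_comp_comm hf).symm.trans (integral_congr_ae (ae_of_all _ fun x => ?_))
    exact Matrix.isHermitian_iff_isSymm.1 (hpos x).isHermitian
  · let q : Matrix n n ℝ →L[ℝ] ℝ := LinearMap.toContinuousLinearMap
      (dotProductBilin ℝ ℝ (star v) ∘ₗ (Matrix.mulVecBilin ℝ ℝ).flip v)
    have hq (x : α) : 0 < q (f x) := (hpos x).dotProduct_mulVec_pos hv
    change 0 < q _
    rw [← q.integral_comp_comm hf, integral_pos_iff_support_of_nonneg (fun x => (hq x).le)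
      (q.integrable_comp hf), Function.support_eq_univ fun x => (hq x).ne']
    exact Measure.measure_univ_pos.2 hμ

/-- Lyapunov equation: if all complex eigenvalues of `Q` have strictly
negative real part, there is a symmetric positive definite matrix `P` with
`P Q + Qᵀ P = -Id`. -/
theorem exists_lyapunov_solution {n : Type*} [Fintype n] [DecidableEq n]
    (Q : Matrix n n ℝ)
    (hQ : ∀ z ∈ spectrum ℂ (Q.map (algebraMap ℝ ℂ)), z.re < 0) :
    ∃ P : Matrix n n ℝ, P.IsSymm ∧ P.PosDef ∧ P * Q + Qᵀ * P = -1 := by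
  obtain ⟨c, hc, hdecay⟩ := Matrix.exists_isBigO_exp_smul_of_re_lt_zero Q hQ
  set F := fun t : ℝ => exp (t • Qᵀ) * exp (t • Q)
  have hF_eq (t : ℝ) : F t = (exp (t • Q))ᵀ * exp (t • Q) := by
    simp only [F, ← Matrix.transpose_smul]
    exact congrArg (· * _) (Matrix.exp_transpose _)
  let T : Matrix n n ℝ →L[ℝ] Matrix n n ℝ :=
    LinearMap.toContinuousLinearMap (Matrix.transposeLinearEquiv n n ℝ ℝ).toLinearMap
  have hF_decay : F =O[atTop] fun t => Real.exp (-(2 * c) * t) := by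
    refine (((T.isBigO_comp _ _).trans hdecay).mul hdecay).congr (fun t => (hF_eq t).symm)
      fun t => ?_
    rw [← Real.exp_add]
    ring_nf
  have hF_int : IntegrableOn F (Ioi 0) :=
    integrableOn_Ioi_of_isBigO_exp_neg (by fun_prop) (by positivity) hF_decay 0
  have hF_lim : Tendsto F atTop (𝓝 0) := hF_decay.trans_tendsto <|
    Real.tendsto_exp_atBot.comp (tendsto_id.const_mul_atTop_of_neg (by linarith))
  have hF_pos (t : ℝ) : (F t).PosDef := by
    rw [hF_eq, ← Matrix.conjTranspose_eq_transpose_of_trivial]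
    exact .conjTranspose_mul_self _ (Matrix.mulVec_injective_iff_isUnit.2 (Matrix.isUnit_exp _))
  have hP : (∫ t in Ioi (0 : ℝ), F t).PosDef := .integral hF_int hF_pos (by simp)
  refine ⟨_, Matrix.isHermitian_iff_isSymm.1 hP.isHermitian, hP, ?_⟩
  rw [add_comm]
  exact mul_integral_exp_mul_exp_add_integral_mul_eq_neg_one hF_int hF_lim
end

section
/- Let A be an n×n real matrix all of whose complex eigenvalues have strictly negative real part. Then A is invertible, the function s ↦ exp(sA) (matrix exponential) is integrable on [0, ∞), and ∫₀^∞ exp(sA) ds = −A⁻¹. -/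
open Matrix MeasureTheory

attribute [local instance] Matrix.normedAddCommGroup Matrix.normedSpace

noncomputable local instance {n : Type*} [Fintype n] : ContinuousENorm (Matrix n n ℝ) :=
  SeminormedAddGroup.toContinuousENorm

noncomputable local instance {n : Type*} [Fintype n] : CompleteSpace (Matrix n n ℝ) :=
  inferInstanceAs (CompleteSpace (n → n → ℝ))

/-!
Every eigenvalue of `exp A` is `exp λ` for an eigenvalue `λ` of `A` (look at a common eigenvector
of the commuting matrices `A` and `exp A`), so the spectral radius of `exp A` is below some
`exp (-δ) < 1`. Gelfand's formula turns this into `‖exp A ^ m‖ ≤ exp (-δ m)` for large `m`, and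
splitting `s = (s - ⌊s⌋) + ⌊s⌋` gives `exp (s A) = O(exp (-δ s))`. Hence `s ↦ exp (s A)` is
integrable on `[0, ∞)` and tends to `0`, and the fundamental theorem of calculus for
`d/ds exp (s A) = exp (s A) A` yields `(∫₀^∞ exp (s A) ds) A = -1`: a left inverse of `A`.
-/

open Filter Asymptotics Topology

namespace Module.End

variable {K V : Type*} [Field K] [IsAlgClosed K] [AddCommGroup V] [Module K V]
  [FiniteDimensional K V]

theorem exists_hasEigenvector_of_commute_s10 {f g : End K V} (hfg : Commute f g) {μ : K}
    (hμ : g.HasEigenvalue μ) : ∃ ν v, f.HasEigenvector ν v ∧ g.HasEigenvector μ v := by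
  have hmaps : Set.MapsTo f (g.eigenspace μ) (g.eigenspace μ) :=
    mapsTo_genEigenspace_of_comm hfg.symm μ 1
  have : Nontrivial (g.eigenspace μ) := Submodule.nontrivial_iff_ne_bot.mpr hμ
  obtain ⟨ν, hν⟩ := exists_eigenvalue (f.restrict hmaps)
  obtain ⟨⟨v, hvμ⟩, hν⟩ := hν.exists_hasEigenvector
  have hv0 : v ≠ 0 := fun h => hν.2 (Subtype.ext h)
  refine ⟨ν, v, ⟨?_, hv0⟩, ⟨hvμ, hv0⟩⟩
  rw [mem_eigenspace_iff]
  exact congrArg Subtype.val hν.apply_eq_smul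

end Module.End

section BanachAlgebra

variable {𝔸 : Type*} [NormedRing 𝔸] [CompleteSpace 𝔸]

theorem spectrum.eventually_norm_pow_le_pow [NormedAlgebra ℂ 𝔸] {a : 𝔸} {r : ℝ} (hr : 0 ≤ r)
    (h : ∀ z ∈ spectrum ℂ a, ‖z‖ < r) : ∀ᶠ m : ℕ in atTop, ‖a ^ m‖ ≤ r ^ m := by
  rcases subsingleton_or_nontrivial 𝔸 with _ | _
  · exact Eventually.of_forall fun m => by simpa [Subsingleton.elim (a ^ m) 0] using pow_nonneg hr m
  lift r to NNReal using hr
  have hρ : spectralRadius ℂ a < r :=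
    spectrum.spectralRadius_lt_of_forall_lt a fun z hz => by exact_mod_cast h z hz
  filter_upwards [(spectrum.pow_norm_pow_one_div_tendsto_nhds_spectralRadius a).eventually_lt_const
    hρ, eventually_ne_atTop 0] with m hm hm0
  rw [← ENNReal.ofReal_coe_nnreal, ENNReal.ofReal_lt_ofReal_iff_of_nonneg (by positivity)] at hm
  rw [← Real.rpow_inv_natCast_pow (norm_nonneg (a ^ m)) hm0, ← one_div]
  exact pow_le_pow_left₀ (by positivity) hm.le m

variable [NormedAlgebra ℝ 𝔸]

namespace NormedSpace

theorem exp_smul_eq_exp_sub_smul_mul_pow (a : 𝔸) (s : ℝ) (m : ℕ) :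
    exp (s • a) = exp ((s - m) • a) * exp a ^ m := by
  let +nondep : NormedAlgebra ℚ 𝔸 := .restrictScalars ℚ ℝ 𝔸
  rw [← exp_nsmul, ← exp_add_of_commute (((Commute.refl a).smul_left _).smul_right _),
    ← Nat.cast_smul_eq_nsmul ℝ, ← add_smul, sub_add_cancel]

theorem isBigO_exp_smul_of_eventually_norm_exp_pow_le {a : 𝔸} {δ : ℝ} (hδ : 0 ≤ δ)
    (h : ∀ᶠ m : ℕ in atTop, ‖exp a ^ m‖ ≤ Real.exp (-δ) ^ m) :
    (fun s : ℝ => exp (s • a)) =O[atTop] fun s => Real.exp (-δ * s) := by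
  have hcont : Continuous fun s : ℝ => exp (s • a) :=
    continuous_iff_continuousAt.2 fun s => (hasDerivAt_exp_smul_const a s).continuousAt
  obtain ⟨K, hK⟩ := (isCompact_Icc (a := (0 : ℝ)) (b := 1)).exists_bound_of_continuousOn
    hcont.continuousOn
  have hK0 : 0 ≤ K := (norm_nonneg _).trans (hK 0 ⟨le_rfl, zero_le_one⟩)
  obtain ⟨M, hM⟩ := eventually_atTop.1 h
  refine IsBigO.of_bound (K * Real.exp δ) ?_
  filter_upwards [eventually_ge_atTop (M : ℝ)] with s hs
  have hfloor : (⌊s⌋₊ : ℝ) ≤ s := Nat.floor_le ((Nat.cast_nonneg M).trans hs)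
  have hfloor' : s < ⌊s⌋₊ + 1 := Nat.lt_floor_add_one s
  calc ‖exp (s • a)‖
      ≤ ‖exp ((s - ⌊s⌋₊) • a)‖ * ‖exp a ^ ⌊s⌋₊‖ := by
        rw [exp_smul_eq_exp_sub_smul_mul_pow a s ⌊s⌋₊]
        exact norm_mul_le _ _
    _ ≤ K * Real.exp (-δ) ^ ⌊s⌋₊ :=
        mul_le_mul (hK _ ⟨by linarith, by linarith⟩) (hM _ (Nat.le_floor hs)) (norm_nonneg _) hK0
    _ ≤ K * Real.exp δ * ‖Real.exp (-δ * s)‖ := by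
        rw [← Real.exp_nat_mul, Real.norm_eq_abs, abs_of_pos (Real.exp_pos _), mul_assoc,
          ← Real.exp_add]
        gcongr
        nlinarith

end NormedSpace

end BanachAlgebra

theorem MeasureTheory.integrableOn_Ici_of_isBigO_exp_neg {E : Type*} [NormedAddCommGroup E]
    {f : ℝ → E} {a b : ℝ} (hb : 0 < b) (hf : ContinuousOn f (Set.Ici a))
    (ho : f =O[atTop] fun x => Real.exp (-b * x)) : IntegrableOn f (Set.Ici a) :=
  (hf.locallyIntegrableOn measurableSet_Ici).integrableOn_of_isBigO_atTop ho
    ⟨Set.Ioi b, Ioi_mem_atTop b, exp_neg_integrableOn_Ioi b hb⟩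

namespace Matrix

variable {n : Type*} [Fintype n] [DecidableEq n]

theorem pow_mulVec_of_mulVec_eq_smul {R : Type*} [CommSemiring R] {B : Matrix n n R}
    {v : n → R} {l : R} (hv : B *ᵥ v = l • v) (k : ℕ) : B ^ k *ᵥ v = l ^ k • v := by
  induction k with
  | zero => simp
  | succ k ih => rw [pow_succ', ← mulVec_mulVec, ih, mulVec_smul, hv, smul_smul, pow_succ]

/- Statements about `NormedSpace.exp` of matrices only involve the topology of `Matrix n n 𝕜`;
inside proofs we use the (submultiplicative) L2 operator norm, which induces it. -/

theorem exp_mulVec_of_mulVec_eq_smul_s10 {B : Matrix n n ℂ} {v : n → ℂ} {l : ℂ}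
    (hv : B *ᵥ v = l • v) : NormedSpace.exp B *ᵥ v = Complex.exp l • v := by
  open scoped Norms.L2Operator in
  have hB := (NormedSpace.exp_series_hasSum_exp' (𝕂 := ℂ) B).map
    (mulVec.addMonoidHomLeft v) (continuous_id.matrix_mulVec continuous_const)
  have hl := (NormedSpace.exp_series_hasSum_exp' (𝕂 := ℂ) l).smul_const v
  rw [Complex.exp_eq_exp_ℂ]
  refine hB.unique (hl.congr_fun fun k => ?_)
  change ((k.factorial⁻¹ : ℂ) • B ^ k) *ᵥ v = _
  rw [smul_mulVec, pow_mulVec_of_mulVec_eq_smul hv, smul_smul, smul_eq_mul]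

theorem spectrum_exp_subset (B : Matrix n n ℂ) :
    spectrum ℂ (NormedSpace.exp B) ⊆ Complex.exp '' spectrum ℂ B := by
  intro μ hμ
  rw [← spectrum_toLin', ← Module.End.hasEigenvalue_iff_mem_spectrum] at hμ
  have hcomm : Commute (toLin' B) (toLin' (NormedSpace.exp B)) :=
    (Commute.refl B).exp_right.map toLinAlgEquiv'
  obtain ⟨l, v, hBv, hEv⟩ := Module.End.exists_hasEigenvector_of_commute_s10 hcomm hμ
  refine ⟨l, ?_, ?_⟩
  · rw [← spectrum_toLin', ← Module.End.hasEigenvalue_iff_mem_spectrum]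
    exact Module.End.hasEigenvalue_of_hasEigenvector hBv
  · have h := exp_mulVec_of_mulVec_eq_smul_s10 (by simpa using hBv.apply_eq_smul)
    rw [← toLin'_apply, hEv.apply_eq_smul] at h
    exact smul_left_injective ℂ hBv.2 h.symm

theorem exp_map_algebraMap (M : Matrix n n ℝ) :
    NormedSpace.exp (M.map (algebraMap ℝ ℂ)) = (NormedSpace.exp M).map (algebraMap ℝ ℂ) := by
  open scoped Norms.L2Operator in
  let +nondep : NormedAlgebra ℚ (Matrix n n ℝ) := .restrictScalars ℚ ℝ _
  exact (NormedSpace.map_exp (algebraMap ℝ ℂ).mapMatrix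
    (continuous_id.matrix_map (continuous_algebraMap ℝ ℂ)) M).symm

theorem exists_isBigO_exp_smul_apply (B : Matrix n n ℂ) (hB : ∀ z ∈ spectrum ℂ B, z.re < 0) :
    ∃ δ > 0, ∀ i j,
      (fun s : ℝ => NormedSpace.exp (s • B) i j) =O[atTop] fun s => Real.exp (-δ * s) := by
  have hev (z : ℂ) (hz : z ∈ spectrum ℂ B) : ∀ᶠ δ in 𝓝[>] (0 : ℝ), z.re < -δ :=
    nhdsWithin_le_nhds <| (continuous_neg.tendsto 0).eventually_const_lt (by simpa using hB z hz)
  obtain ⟨δ, hδB, hδ⟩ :=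
    ((B.finite_spectrum.eventually_all.2 hev).and self_mem_nhdsWithin).exists
  have hexp (z : ℂ) (hz : z ∈ spectrum ℂ (NormedSpace.exp B)) : ‖z‖ < Real.exp (-δ) := by
    obtain ⟨l, hl, rfl⟩ := spectrum_exp_subset B hz
    rw [Complex.norm_exp]
    exact Real.exp_lt_exp.2 (hδB l hl)
  refine ⟨δ, hδ, fun i j => ?_⟩
  open scoped Norms.L2Operator in
  exact ((entryLinearMap ℂ ℂ i j).toContinuousLinearMap.isBigO_comp _ _).trans
    (NormedSpace.isBigO_exp_smul_of_eventually_norm_exp_pow_le hδ.le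
      (spectrum.eventually_norm_pow_le_pow (Real.exp_pos _).le hexp))

theorem exists_isBigO_exp_smul (A : Matrix n n ℝ)
    (hA : ∀ z ∈ spectrum ℂ (A.map (algebraMap ℝ ℂ)), z.re < 0) :
    ∃ δ > 0, (fun s : ℝ => NormedSpace.exp (s • A)) =O[atTop] fun s => Real.exp (-δ * s) := by
  obtain ⟨δ, hδ, hO⟩ := exists_isBigO_exp_smul_apply _ hA
  refine ⟨δ, hδ, isBigO_pi.2 fun i => isBigO_pi.2 fun j => ?_⟩
  have hnorm (s : ℝ) :
      ‖NormedSpace.exp (s • A.map (algebraMap ℝ ℂ)) i j‖ = ‖NormedSpace.exp (s • A) i j‖ := by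
    have hmap : s • A.map (algebraMap ℝ ℂ) = (s • A).map (algebraMap ℝ ℂ) := by
      ext; simp [Complex.real_smul]
    rw [hmap, exp_map_algebraMap, map_apply, norm_algebraMap']
  exact isBigO_norm_left.1 ((isBigO_norm_left.2 (hO i j)).congr_left hnorm)

theorem hasDerivAt_exp_smul_const (A : Matrix n n ℝ) (t : ℝ) :
    HasDerivAt (fun s : ℝ => NormedSpace.exp (s • A)) (NormedSpace.exp (t • A) * A) t := by
  -- the slope formulation only sees the topology, common to the entrywise and the L2 norm
  refine hasDerivAt_iff_tendsto_slope.2 ?_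
  open scoped Norms.L2Operator in
  exact hasDerivAt_iff_tendsto_slope.1 (_root_.hasDerivAt_exp_smul_const A t)

theorem integral_Ici_exp_smul_mul (A : Matrix n n ℝ)
    (hint : IntegrableOn (fun s : ℝ => NormedSpace.exp (s • A)) (Set.Ici 0))
    (hlim : Tendsto (fun s : ℝ => NormedSpace.exp (s • A)) atTop (𝓝 0)) :
    (∫ s in Set.Ici (0 : ℝ), NormedSpace.exp (s • A)) * A = -1 := by
  replace hint := hint.mono_set Set.Ioi_subset_Ici_self
  let R : Matrix n n ℝ →L[ℝ] Matrix n n ℝ := (LinearMap.mulRight ℝ A).toContinuousLinearMap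
  have hFTC := integral_Ioi_of_hasDerivAt_of_tendsto
    (hasDerivAt_exp_smul_const A 0).continuousAt.continuousWithinAt
    (fun t _ => hasDerivAt_exp_smul_const A t) (R.integrable_comp hint) hlim
  rw [zero_smul, NormedSpace.exp_zero, zero_sub] at hFTC
  rw [integral_Ici_eq_integral_Ioi, ← hFTC]
  exact (R.integral_comp_comm hint).symm

end Matrix

/-- if all complex eigenvalues of `A` have strictly negative real part,
then `A` is invertible, `s ↦ exp(sA)` is integrable on `[0, ∞)`, and
`∫₀^∞ exp(sA) ds = -A⁻¹`. -/
theorem integral_exp_eq_neg_inv {n : Type*} [Fintype n] [DecidableEq n]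
    (A : Matrix n n ℝ)
    (hA : ∀ z ∈ spectrum ℂ (A.map (algebraMap ℝ ℂ)), z.re < 0) :
    IsUnit A ∧
    IntegrableOn (fun s : ℝ => NormedSpace.exp (s • A)) (Set.Ici (0:ℝ)) ∧
    ∫ s in Set.Ici (0:ℝ), NormedSpace.exp (s • A) = -A⁻¹ := by
  obtain ⟨δ, hδ, hO⟩ := A.exists_isBigO_exp_smul hA
  have hcont : Continuous fun s : ℝ => NormedSpace.exp (s • A) :=
    continuous_iff_continuousAt.2 fun t => (A.hasDerivAt_exp_smul_const t).continuousAt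
  have hint := integrableOn_Ici_of_isBigO_exp_neg (a := 0) hδ hcont.continuousOn hO
  have hlim : Tendsto (fun s : ℝ => NormedSpace.exp (s • A)) atTop (𝓝 0) :=
    hO.trans_tendsto <| Real.tendsto_exp_atBot.comp <|
      tendsto_id.const_mul_atTop_of_neg (neg_neg_iff_pos.2 hδ)
  have hleft : (-∫ s in Set.Ici (0:ℝ), NormedSpace.exp (s • A)) * A = 1 := by
    rw [neg_mul, A.integral_Ici_exp_smul_mul hint hlim, neg_neg]
  exact ⟨(isUnit_iff_isUnit_det A).2 (isUnit_det_of_left_inverse hleft), hint,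
    by rw [inv_eq_left_inv hleft, neg_neg]⟩
end

section
/- Let M be an n×n Metzler real matrix each of whose columns sums to zero. Then every complex eigenvalue λ of M satisfies Re(λ) ≤ 0, and Re(λ) = 0 implies λ = 0. -/
/-!
Apply Gershgorin's theorem to the columns of `M`. Since the column sums vanish and the
off-diagonal entries are nonnegative, the `k`-th column disc has centre `M k k ≤ 0` and radius
`-M k k`: it lies in the closed left half-plane and meets the imaginary axis only at `0`.
-/

open Matrix

def Matrix.IsMetzler {n : Type*} (M : Matrix n n ℝ) : Prop :=
  ∀ i j, i ≠ j → 0 ≤ M i j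

namespace Matrix

variable {n : Type*} [Fintype n] [DecidableEq n]

theorem spectrum_transpose {R : Type*} [CommRing R] (A : Matrix n n R) :
    spectrum R Aᵀ = spectrum R A := by
  ext z
  simp only [spectrum.mem_iff, algebraMap_eq_diagonal, ← isUnit_transpose (_ - Aᵀ),
    transpose_sub, transpose_transpose, diagonal_transpose]

theorem exists_mem_closedBall_sum_col_of_mem_spectrum {K : Type*} [NormedField K]
    {A : Matrix n n K} {μ : K} (hμ : μ ∈ spectrum K A) :
    ∃ k, μ ∈ Metric.closedBall (A k k) (∑ i ∈ Finset.univ.erase k, ‖A i k‖) := by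
  rw [← spectrum_transpose, ← spectrum_toLin', ← Module.End.hasEigenvalue_iff_mem_spectrum]
    at hμ
  exact eigenvalue_mem_ball hμ

theorem IsMetzler.sum_erase_abs_eq_neg_diag {M : Matrix n n ℝ} (hM : M.IsMetzler)
    (hcol : ∀ j, ∑ i, M i j = 0) (k : n) :
    ∑ i ∈ Finset.univ.erase k, |M i k| = -M k k := by
  rw [Finset.sum_congr rfl fun i hi ↦ abs_of_nonneg (hM i k (Finset.ne_of_mem_erase hi)),
    eq_neg_iff_add_eq_zero, Finset.sum_erase_add _ _ (Finset.mem_univ k), hcol]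

end Matrix

theorem Complex.re_nonpos_of_mem_closedBall_neg {d : ℝ} {z : ℂ}
    (hz : z ∈ Metric.closedBall (d : ℂ) (-d)) : z.re ≤ 0 ∧ (z.re = 0 → z = 0) := by
  rw [mem_closedBall_iff_norm] at hz
  have hre : z.re - d ≤ -d := calc
    z.re - d = (z - d).re := by simp
    _ ≤ ‖z - d‖ := re_le_norm _
    _ ≤ -d := hz
  refine ⟨by linarith, fun hre0 ↦ ext hre0 ?_⟩
  rw [zero_im]
  have hsq : ‖z - d‖ ^ 2 ≤ d ^ 2 := by nlinarith [norm_nonneg (z - d)]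
  rw [Complex.sq_norm, normSq_apply] at hsq
  simp only [sub_re, ofReal_re, hre0, sub_im, ofReal_im, sub_zero] at hsq
  nlinarith

/-- every complex eigenvalue `λ` of a Metzler matrix whose columns sum to
zero satisfies `Re λ ≤ 0`, and `Re λ = 0` implies `λ = 0`. -/
theorem metzler_colSumZero_spectrum {n : Type*} [Fintype n] [DecidableEq n]
    (M : Matrix n n ℝ) (hM : M.IsMetzler) (hcol : ∀ j, ∑ i, M i j = 0) :
    ∀ z ∈ spectrum ℂ (M.map (algebraMap ℝ ℂ)), z.re ≤ 0 ∧ (z.re = 0 → z = 0) := by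
  intro z hz
  obtain ⟨k, hk⟩ := exists_mem_closedBall_sum_col_of_mem_spectrum hz
  apply Complex.re_nonpos_of_mem_closedBall_neg
  simpa only [map_apply, Complex.coe_algebraMap, Complex.norm_real, Real.norm_eq_abs,
    hM.sum_erase_abs_eq_neg_diag hcol] using hk
end

section
/- Let M be an n×n Metzler real matrix each of whose columns sums to zero, and let D be a diagonal n×n real matrix with strictly positive diagonal entries. Then D − M is invertible and its inverse (D − M)⁻¹ has all entries nonnegative. -/
open Matrix

/-- if `M` is Metzler with columns summing to zero and `D = diagonal d`
has strictly positive diagonal entries, then `D - M` is invertible and its inverse has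
nonnegative entries. -/
theorem diagonal_sub_metzler_inv_nonneg {n : Type*} [Fintype n] [DecidableEq n]
    (M : Matrix n n ℝ) (hM : M.IsMetzler) (hcol : ∀ j, ∑ i, M i j = 0)
    (d : n → ℝ) (hd : ∀ i, 0 < d i) :
    IsUnit (Matrix.diagonal d - M) ∧ ∀ i j, 0 ≤ (Matrix.diagonal d - M)⁻¹ i j := by
  set A : Matrix n n ℝ := Matrix.diagonal d - M with hA
  have hoff : ∀ j k, j ≠ k → A j k ≤ 0 := by
    intro j k hjk
    have : A j k = -M j k := by
      simp [hA, Matrix.diagonal_apply_ne _ hjk]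
    rw [this]
    linarith [hM j k hjk]
  have hcolsum : ∀ k, ∑ j, A j k = d k := by
    intro k
    have h1 : ∑ j, Matrix.diagonal d j k = d k := by
      rw [Finset.sum_eq_single k] <;>
        simp +contextual [Matrix.diagonal_apply_ne]
    simp [hA, Matrix.sub_apply, Finset.sum_sub_distrib, h1, hcol k]
  -- key: if Aᵀ x ≥ 0 entrywise then x ≥ 0 entrywise
  have key : ∀ x : n → ℝ, (∀ i, 0 ≤ ∑ j, A j i * x j) → ∀ i, 0 ≤ x i := by
    intro x hx
    by_contra hcon
    push_neg at hcon
    obtain ⟨i, hi⟩ := hcon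
    obtain ⟨k, -, hk⟩ := Finset.exists_min_image Finset.univ x ⟨i, Finset.mem_univ i⟩
    have hxk : x k < 0 := lt_of_le_of_lt (hk i (Finset.mem_univ i)) hi
    have hle : ∑ j, A j k * x j ≤ ∑ j, A j k * x k := by
      apply Finset.sum_le_sum
      intro j _
      rcases eq_or_ne j k with rfl | hjk
      · exact le_refl _
      · exact mul_le_mul_of_nonpos_left (hk j (Finset.mem_univ j)) (hoff j k hjk)
    rw [← Finset.sum_mul, hcolsum k] at hle
    have : d k * x k < 0 := mul_neg_of_pos_of_neg (hd k) hxk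
    linarith [hx k]
  -- invertibility
  have hdet : A.det ≠ 0 := by
    rw [← Matrix.det_transpose]
    intro h
    obtain ⟨v, hv0, hv⟩ := Matrix.exists_mulVec_eq_zero_iff.mpr h
    apply hv0
    funext i
    have h1 : ∀ i, 0 ≤ v i := by
      apply key
      intro i
      have : (Aᵀ.mulVec v) i = 0 := by rw [hv]; rfl
      simp only [Matrix.mulVec, dotProduct, Matrix.transpose_apply] at this
      rw [this]
    have h2 : ∀ i, 0 ≤ -v i := by
      apply key
      intro i
      have : (Aᵀ.mulVec (-v)) i = 0 := by rw [Matrix.mulVec_neg, hv]; simp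
      simp only [Matrix.mulVec, dotProduct, Matrix.transpose_apply,
        Pi.neg_apply] at this
      rw [← this]
    have := h1 i
    have := h2 i
    simp only [Pi.zero_apply]
    linarith
  have hunit : IsUnit A := by
    rw [Matrix.isUnit_iff_isUnit_det]
    exact isUnit_iff_ne_zero.mpr hdet
  refine ⟨hunit, ?_⟩
  intro i j
  have hmul : A⁻¹ * A = 1 := Matrix.nonsing_inv_mul A (isUnit_iff_ne_zero.mpr hdet)
  have := key (fun k => A⁻¹ i k) (fun l => by
    have : ∑ k, A k l * A⁻¹ i k = (A⁻¹ * A) i l := by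
      simp [Matrix.mul_apply, mul_comm]
    rw [this, hmul]
    by_cases h : i = l <;> simp [Matrix.one_apply, h])
  exact this j
end

section
/- Let M be an n×n Metzler real matrix each of whose columns sums to zero, let β, γ, δ be diagonal n×n real matrices with strictly positive diagonal entries, and let μ ∈ ℝ^n be an entrywise nonnegative vector. Then M − δ and M − γ are invertible, and the next-generation matrix G = β·diag(μ)·(M − δ)⁻¹·γ·(M − γ)⁻¹ has all entries nonnegative. -/
open Matrix

lemma mulVec_nonneg_imp_nonneg {n : Type*} [Fintype n] [DecidableEq n]
    (C : Matrix n n ℝ) (hoff : ∀ i j, i ≠ j → C i j ≤ 0)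
    (hrow : ∀ i, 0 < ∑ j, C i j) (x : n → ℝ) (hx : ∀ i, 0 ≤ (C *ᵥ x) i) :
    ∀ i, 0 ≤ x i := by
  by_contra h
  push_neg at h
  obtain ⟨i0, hi0⟩ := h
  obtain ⟨i, -, hmin⟩ := Finset.exists_min_image Finset.univ x ⟨i0, Finset.mem_univ _⟩
  have hxi : x i < 0 := lt_of_le_of_lt (hmin i0 (Finset.mem_univ _)) hi0
  have hle : (C *ᵥ x) i ≤ (∑ j, C i j) * x i := by
    rw [Matrix.mulVec, dotProduct, Finset.sum_mul]
    refine Finset.sum_le_sum fun j _ => ?_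
    rcases eq_or_ne j i with rfl | hij
    · exact le_refl _
    · exact mul_le_mul_of_nonpos_left (hmin j (Finset.mem_univ _)) (hoff i j (Ne.symm hij))
  have : (∑ j, C i j) * x i < 0 := mul_neg_of_pos_of_neg (hrow i) hxi
  exact absurd (hx i) (not_le.mpr (lt_of_le_of_lt hle this))

lemma isUnit_and_inv_nonneg {n : Type*} [Fintype n] [DecidableEq n]
    (C : Matrix n n ℝ) (hoff : ∀ i j, i ≠ j → C i j ≤ 0)
    (hrow : ∀ i, 0 < ∑ j, C i j) :
    IsUnit C ∧ ∀ i j, 0 ≤ C⁻¹ i j := by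
  have hinj : Function.Injective C.mulVec := by
    intro x y hxy
    have h1 : ∀ i, 0 ≤ (C *ᵥ (x - y)) i := by
      intro i
      simp [Matrix.mulVec_sub, hxy]
    have h2 : ∀ i, 0 ≤ (C *ᵥ (y - x)) i := by
      intro i
      simp [Matrix.mulVec_sub, hxy]
    have h1' := mulVec_nonneg_imp_nonneg C hoff hrow _ h1
    have h2' := mulVec_nonneg_imp_nonneg C hoff hrow _ h2
    funext i
    have := h1' i
    have := h2' i
    simp only [Pi.sub_apply, sub_nonneg] at *
    linarith
  have hu : IsUnit C := Matrix.mulVec_injective_iff_isUnit.mp hinj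
  refine ⟨hu, fun i j => ?_⟩
  have hCC : C * C⁻¹ = 1 := Matrix.mul_nonsing_inv C ((Matrix.isUnit_iff_isUnit_det C).mp hu)
  have hcol : C *ᵥ (fun k => C⁻¹ k j) = fun i => (1 : Matrix n n ℝ) i j := by
    funext i
    have := congrFun (congrFun hCC i) j
    simpa [Matrix.mulVec, dotProduct, Matrix.mul_apply] using this
  have : ∀ i, 0 ≤ (C *ᵥ fun k => C⁻¹ k j) i := by
    intro i
    rw [hcol]
    by_cases h : i = j <;> simp [Matrix.one_apply, h]
  exact mulVec_nonneg_imp_nonneg C hoff hrow _ this i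

/-- For `d` with positive entries, `diagonal d - M` (M Metzler, columns summing to 0):
`M - diagonal d` is a unit and `(M - diagonal d)⁻¹ ≤ 0` entrywise. -/
lemma sub_diagonal_unit_inv_nonpos {n : Type*} [Fintype n] [DecidableEq n]
    (M : Matrix n n ℝ) (hM : M.IsMetzler) (hcol : ∀ j, ∑ i, M i j = 0)
    (d : n → ℝ) (hd : ∀ i, 0 < d i) :
    IsUnit (M - Matrix.diagonal d) ∧ ∀ i j, (M - Matrix.diagonal d)⁻¹ i j ≤ 0 := by
  set C : Matrix n n ℝ := (Matrix.diagonal d - M)ᵀ with hC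
  have hoff : ∀ i j, i ≠ j → C i j ≤ 0 := by
    intro i j hij
    simp only [hC, Matrix.transpose_apply, Matrix.sub_apply, Matrix.diagonal_apply_ne' _ hij]
    simpa using hM j i (Ne.symm hij)
  have hrow : ∀ i, 0 < ∑ j, C i j := by
    intro i
    have : ∑ j, C i j = d i := by
      simp only [hC, Matrix.transpose_apply, Matrix.sub_apply, Finset.sum_sub_distrib, hcol i]
      simp [Matrix.diagonal_apply]
    rw [this]; exact hd i
  obtain ⟨hu, hinv⟩ := isUnit_and_inv_nonneg C hoff hrow
  have huT : IsUnit (Matrix.diagonal d - M) := by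
    rwa [hC, Matrix.isUnit_transpose] at hu
  have hMu : IsUnit (M - Matrix.diagonal d) := by
    rw [← neg_sub (Matrix.diagonal d) M]; exact huT.neg
  refine ⟨hMu, fun i j => ?_⟩
  have hinv_eq : (M - Matrix.diagonal d)⁻¹ = -((Matrix.diagonal d - M)⁻¹) := by
    have h1 : (M - Matrix.diagonal d) * (-((Matrix.diagonal d - M)⁻¹)) = 1 := by
      have h0 := Matrix.mul_nonsing_inv (Matrix.diagonal d - M)
        ((Matrix.isUnit_iff_isUnit_det _).mp huT)
      rw [mul_neg, ← neg_mul, neg_sub, h0]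
    exact Matrix.inv_eq_right_inv h1
  rw [hinv_eq]
  have : (Matrix.diagonal d - M)⁻¹ i j = C⁻¹ j i := by
    rw [hC, ← Matrix.transpose_nonsing_inv, Matrix.transpose_apply]
  simp only [Matrix.neg_apply, this]
  linarith [hinv j i]

/-- for `M` Metzler with columns summing to zero, `β, γ, δ` diagonal with
positive diagonal entries, and `μ ≥ 0`, the matrices `M - δ` and `M - γ` are invertible and
the next-generation matrix `G = β ⬝ diag μ ⬝ (M - δ)⁻¹ ⬝ γ ⬝ (M - γ)⁻¹` is entrywise
nonnegative. -/
theorem nextGeneration_nonneg {n : Type*} [Fintype n] [DecidableEq n]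
    (M : Matrix n n ℝ) (hM : M.IsMetzler) (hcol : ∀ j, ∑ i, M i j = 0)
    (βv γv δv : n → ℝ) (hβ : ∀ i, 0 < βv i) (hγ : ∀ i, 0 < γv i) (hδ : ∀ i, 0 < δv i)
    (μ : n → ℝ) (hμ : ∀ i, 0 ≤ μ i) :
    IsUnit (M - Matrix.diagonal δv) ∧ IsUnit (M - Matrix.diagonal γv) ∧
    ∀ i j, 0 ≤ (Matrix.diagonal βv * Matrix.diagonal μ * (M - Matrix.diagonal δv)⁻¹ *
      Matrix.diagonal γv * (M - Matrix.diagonal γv)⁻¹) i j := by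
  obtain ⟨huδ, hδinv⟩ := sub_diagonal_unit_inv_nonpos M hM hcol δv hδ
  obtain ⟨huγ, hγinv⟩ := sub_diagonal_unit_inv_nonpos M hM hcol γv hγ
  refine ⟨huδ, huγ, fun i j => ?_⟩
  rw [show (Matrix.diagonal βv * Matrix.diagonal μ * (M - Matrix.diagonal δv)⁻¹ *
      Matrix.diagonal γv * (M - Matrix.diagonal γv)⁻¹) i j =
      ∑ k, (βv i * μ i * (M - Matrix.diagonal δv)⁻¹ i k * γv k) *
        (M - Matrix.diagonal γv)⁻¹ k j from by
    rw [Matrix.diagonal_mul_diagonal, Matrix.mul_apply]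
    exact Finset.sum_congr rfl fun k _ => by
      rw [Matrix.mul_diagonal, Matrix.diagonal_mul]]
  refine Finset.sum_nonneg fun k _ => ?_
  have h1 : 0 ≤ (M - Matrix.diagonal δv)⁻¹ i k * (M - Matrix.diagonal γv)⁻¹ k j := by
    have := mul_nonneg (neg_nonneg.mpr (hδinv i k)) (neg_nonneg.mpr (hγinv k j))
    simpa [neg_mul_neg] using this
  have h2 : 0 ≤ βv i * μ i * γv k :=
    mul_nonneg (mul_nonneg (hβ i).le (hμ i)) (hγ k).le
  nlinarith [mul_nonneg h2 h1]
end

section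
/- Let M be an n×n Metzler real matrix each of whose columns sums to zero, with n ≥ 1. Then there exists an entrywise nonnegative vector μ ∈ ℝ^n whose coordinates sum to 1 and such that M·μ = 0. -/
open Matrix

/-- a Metzler matrix (on a nonempty index type) whose columns sum to zero
admits a stationary distribution: an entrywise nonnegative vector `μ` summing to `1` with
`M μ = 0`. -/
theorem metzler_exists_stationary {n : Type*} [Fintype n] [DecidableEq n] [Nonempty n]
    (M : Matrix n n ℝ) (hM : M.IsMetzler) (hcol : ∀ j, ∑ i, M i j = 0) :
    ∃ μ : n → ℝ, (∀ i, 0 ≤ μ i) ∧ (∑ i, μ i = 1) ∧ M.mulVec μ = 0 := by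
  classical
  set c : ℝ := 1 + ∑ i, |M i i| with hc
  have hc0 : 0 < c := by
    have : (0:ℝ) ≤ ∑ i, |M i i| := Finset.sum_nonneg fun i _ => abs_nonneg _
    linarith
  set Q : Matrix n n ℝ := 1 + c⁻¹ • M with hQ
  have hQnn : ∀ i j, 0 ≤ Q i j := by
    intro i j
    by_cases h : i = j
    · subst h
      have h1 : Q i i = 1 + c⁻¹ * M i i := by
        simp [hQ, Matrix.one_apply]
      rw [h1]
      have habs : |M i i| ≤ ∑ k, |M k k| :=
        Finset.single_le_sum (fun k _ => abs_nonneg (M k k)) (Finset.mem_univ i)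
      have hMc : -M i i ≤ c := by
        have := neg_abs_le (M i i)
        simp only [hc]; linarith
      have : -1 ≤ c⁻¹ * M i i := by
        rw [neg_le, ← mul_neg]
        calc c⁻¹ * -M i i ≤ c⁻¹ * c := by
              apply mul_le_mul_of_nonneg_left hMc (inv_nonneg.mpr hc0.le)
          _ = 1 := inv_mul_cancel₀ hc0.ne'
      linarith
    · have h1 : Q i j = c⁻¹ * M i j := by
        simp [hQ, Matrix.one_apply, h]
      rw [h1]
      exact mul_nonneg (inv_nonneg.mpr hc0.le) (hM i j h)
  have hQcol : ∀ j, ∑ i, Q i j = 1 := by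
    intro j
    have : ∑ i, Q i j = ∑ i, ((1 : Matrix n n ℝ) i j + c⁻¹ * M i j) := by
      apply Finset.sum_congr rfl; intro i _; simp [hQ]
    rw [this, Finset.sum_add_distrib, ← Finset.mul_sum, hcol, mul_zero, add_zero]
    simp [Matrix.one_apply, Finset.sum_ite_eq, Finset.mem_univ]
  set S : Set (n → ℝ) := {x | (∀ i, 0 ≤ x i) ∧ ∑ i, x i = 1} with hS
  have hQmap : ∀ x ∈ S, Q.mulVec x ∈ S := by
    rintro x ⟨hx0, hx1⟩
    constructor
    · intro i
      exact Finset.sum_nonneg fun j _ => mul_nonneg (hQnn i j) (hx0 j)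
    · have : ∑ i, Q.mulVec x i = ∑ j, (∑ i, Q i j) * x j := by
        simp only [Matrix.mulVec, dotProduct]
        rw [Finset.sum_comm]
        simp [Finset.sum_mul]
      rw [this]
      simp only [hQcol, one_mul, hx1]
  set x₀ : n → ℝ := fun _ => (Fintype.card n : ℝ)⁻¹ with hx₀def
  have hcard : (0:ℝ) < (Fintype.card n : ℝ) := by
    exact_mod_cast Fintype.card_pos
  have hx₀ : x₀ ∈ S := by
    refine ⟨fun i => inv_nonneg.mpr hcard.le, ?_⟩
    simp only [hx₀def, Finset.sum_const, Finset.card_univ, nsmul_eq_mul]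
    rw [mul_inv_cancel₀ hcard.ne']
  set y : ℕ → n → ℝ := fun k => (Q^k).mulVec x₀ with hydef
  have hysucc : ∀ k, y (k+1) = Q.mulVec (y k) := by
    intro k
    simp only [hydef, pow_succ']
    rw [← Matrix.mulVec_mulVec]
  have hy : ∀ k, y k ∈ S := by
    intro k
    induction k with
    | zero => simpa [hydef] using hx₀
    | succ k ih => rw [hysucc]; exact hQmap _ ih
  set v : ℕ → n → ℝ := fun k => (((k:ℝ)+1))⁻¹ • ∑ i ∈ Finset.range (k+1), y i with hvdef
  have hv : ∀ k, v k ∈ S := by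
    intro k
    have hk0 : (0:ℝ) < (k:ℝ)+1 := by positivity
    constructor
    · intro i
      apply mul_nonneg (inv_nonneg.mpr hk0.le)
      simp only [Finset.sum_apply]
      exact Finset.sum_nonneg fun m _ => (hy m).1 i
    · have : ∑ i, v k i = ((k:ℝ)+1)⁻¹ * ∑ m ∈ Finset.range (k+1), ∑ i, y m i := by
        simp only [hvdef, Pi.smul_apply, smul_eq_mul, ← Finset.mul_sum, Finset.sum_apply]
        rw [Finset.sum_comm]
      rw [this]
      have : ∑ m ∈ Finset.range (k+1), ∑ i, y m i = (k:ℝ)+1 := by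
        rw [Finset.sum_congr rfl fun m _ => (hy m).2]
        simp
      rw [this, inv_mul_cancel₀ hk0.ne']
  -- norm bound on members of S
  have hnorm : ∀ x ∈ S, ‖x‖ ≤ 1 := by
    rintro x ⟨hx0, hx1⟩
    rw [pi_norm_le_iff_of_nonneg zero_le_one]
    intro i
    rw [Real.norm_eq_abs, abs_of_nonneg (hx0 i)]
    rw [← hx1]
    exact Finset.single_le_sum (fun j _ => hx0 j) (Finset.mem_univ i)
  have hSclosed : IsClosed S := by
    have h1 : IsClosed {x : n → ℝ | ∀ i, 0 ≤ x i} := by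
      have : {x : n → ℝ | ∀ i, 0 ≤ x i} = ⋂ i, {x | 0 ≤ x i} := by
        ext x; simp
      rw [this]
      exact isClosed_iInter fun i => isClosed_le continuous_const (continuous_apply i)
    have h2 : IsClosed {x : n → ℝ | ∑ i, x i = 1} :=
      isClosed_eq (by continuity) continuous_const
    exact h1.inter h2
  have hScompact : IsCompact S := by
    apply Metric.isCompact_of_isClosed_isBounded hSclosed
    apply Bornology.IsBounded.subset (Metric.isBounded_closedBall (x := (0 : n → ℝ)) (r := 1))
    intro x hx
    rw [Metric.mem_closedBall, dist_zero_right]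
    exact hnorm x hx
  obtain ⟨μ, hμS, φ, hφ, hlim⟩ := hScompact.tendsto_subseq hv
  -- key estimate: Q (v k) - v k = ((k+1))⁻¹ • (y (k+1) - y 0)
  have hkey : ∀ k, Q.mulVec (v k) - v k = (((k:ℝ)+1))⁻¹ • (y (k+1) - y 0) := by
    intro k
    have h1 : Q.mulVec (v k) = (((k:ℝ)+1))⁻¹ • ∑ i ∈ Finset.range (k+1), y (i+1) := by
      simp only [hvdef]
      rw [Matrix.mulVec_smul]
      congr 1
      have : Q.mulVec (∑ i ∈ Finset.range (k+1), y i)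
          = ∑ i ∈ Finset.range (k+1), Q.mulVec (y i) := by
        have := map_sum Q.mulVecLin y (Finset.range (k+1))
        simpa only [Matrix.mulVecLin_apply] using this
      rw [this]
      exact Finset.sum_congr rfl fun i _ => (hysucc i).symm
    rw [h1, hvdef]
    rw [← smul_sub]
    congr 1
    rw [← Finset.sum_sub_distrib]
    exact Finset.sum_range_sub y (k+1)
  have hbound : ∀ k, ‖Q.mulVec (v k) - v k‖ ≤ 2 * ((k:ℝ)+1)⁻¹ := by
    intro k
    rw [hkey k, norm_smul]
    have hk0 : (0:ℝ) < (k:ℝ)+1 := by positivity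
    rw [Real.norm_eq_abs, abs_of_nonneg (inv_nonneg.mpr hk0.le)]
    rw [mul_comm]
    apply mul_le_mul_of_nonneg_right _ (inv_nonneg.mpr hk0.le)
    calc ‖y (k+1) - y 0‖ ≤ ‖y (k+1)‖ + ‖y 0‖ := norm_sub_le _ _
      _ ≤ 1 + 1 := add_le_add (hnorm _ (hy _)) (hnorm _ (hy _))
      _ = 2 := by norm_num
  have htendszero : Filter.Tendsto (fun k => Q.mulVec (v k) - v k) Filter.atTop (nhds 0) := by
    apply squeeze_zero_norm hbound
    have h1 : Filter.Tendsto (fun k : ℕ => ((k:ℝ)+1)⁻¹) Filter.atTop (nhds 0) :=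
      tendsto_one_div_add_atTop_nhds_zero_nat.congr (by intro k; rw [one_div])
    have := h1.const_mul (2:ℝ)
    simpa using this
  have hQcont : Continuous fun x : n → ℝ => Q.mulVec x := by
    apply continuous_pi
    intro i
    simp only [Matrix.mulVec, dotProduct]
    exact continuous_finset_sum _ fun j _ => (continuous_const.mul (continuous_apply j))
  have hlim2 : Filter.Tendsto (fun k => Q.mulVec (v (φ k)) - v (φ k)) Filter.atTop
      (nhds (Q.mulVec μ - μ)) :=
    ((hQcont.continuousAt.tendsto.comp hlim).sub hlim)
  have hlim3 : Filter.Tendsto (fun k => Q.mulVec (v (φ k)) - v (φ k)) Filter.atTop (nhds 0) :=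
    htendszero.comp hφ.tendsto_atTop
  have hfix : Q.mulVec μ - μ = 0 := tendsto_nhds_unique hlim2 hlim3
  have hQμ : Q.mulVec μ = μ := by
    have := sub_eq_zero.mp hfix; exact this
  have hMμ : M.mulVec μ = 0 := by
    have hexp : Q.mulVec μ = μ + c⁻¹ • M.mulVec μ := by
      rw [hQ, Matrix.add_mulVec, Matrix.one_mulVec, Matrix.smul_mulVec]
    rw [hexp] at hQμ
    have h0 : c⁻¹ • M.mulVec μ = 0 := add_eq_left.mp hQμ
    rcases smul_eq_zero.mp h0 with h | h
    · exact absurd h (inv_ne_zero hc0.ne')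
    · exact h
  exact ⟨μ, hμS.1, hμS.2, hMμ⟩
end

section
/- Let M be an n×n real matrix each of whose columns sums to zero, let δ be a diagonal n×n real matrix with positive diagonal entries δ₁, …, δₙ, let λ > 0 and κ ≥ 0, and let I, R : [0, ∞) → ℝ^n be functions with R differentiable, satisfying R'(t) = δ·I(t) + M·R(t) for all t ≥ 0, with I(t) entrywise nonnegative and I_n(t) ≤ κ·exp(−λt) for every coordinate n and t ≥ 0, and such that R(t) converges to a limit R(∞) as t → ∞. Then each I_n is integrable on [0, ∞), Σ_n R_n(∞) = Σ_n R_n(0) + Σ_n δ_n·∫₀^∞ I_n(t) dt, and consequently Σ_n R_n(∞) ≤ Σ_n R_n(0) + (κ/λ)·Σ_n δ_n. -/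
/-!
Because the columns of `M` sum to zero, the total mass `∑ᵢ Rᵢ` has derivative `∑ᵢ δᵢ Iᵢ`, so
the fundamental theorem of calculus on `[0, ∞)` together with `R t → R∞` gives the balance
identity. The exponential bound makes each `Iᵢ` integrable with `∫₀^∞ Iᵢ ≤ κ / λ`; measurability
of `I`, which is a priori arbitrary, comes from `δ I = R' - M R`.
-/

open Matrix MeasureTheory Filter Set Real

theorem Matrix.sum_mulVec_eq_zero {m ι R : Type*} [Fintype m] [Fintype ι]
    [NonUnitalNonAssocSemiring R] {M : Matrix m ι R} (hM : ∀ j, ∑ i, M i j = 0) (v : ι → R) :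
    ∑ i, (M *ᵥ v) i = 0 := by
  simp only [mulVec, dotProduct]
  rw [Finset.sum_comm]
  simp [← Finset.sum_mul, hM]

theorem HasDerivAt.sum_apply_of_add_mulVec {𝕜 ι m : Type*} [NontriviallyNormedField 𝕜]
    [Fintype ι] [Fintype m] {R : 𝕜 → ι → 𝕜} {v : ι → 𝕜} {M : Matrix ι m 𝕜} {w : m → 𝕜} {t : 𝕜}
    (hM : ∀ j, ∑ i, M i j = 0) (h : HasDerivAt R (v + M *ᵥ w) t) :
    HasDerivAt (fun s => ∑ i, R s i) (∑ i, v i) t := by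
  simpa [Finset.sum_add_distrib, sum_mulVec_eq_zero hM] using
    HasDerivAt.fun_sum (u := Finset.univ) fun i _ => hasDerivAt_pi.1 h i

theorem aestronglyMeasurable_of_hasDerivAt {F : Type*} [NormedAddCommGroup F] [NormedSpace ℝ F]
    [CompleteSpace F] {f f' : ℝ → F} {s : Set ℝ} {μ : Measure ℝ} (hs : MeasurableSet s)
    (hf : ∀ t ∈ s, HasDerivAt f (f' t) t) : AEStronglyMeasurable f' (μ.restrict s) :=
  (aestronglyMeasurable_deriv f _).congr <|
    (ae_restrict_iff' hs).2 <| .of_forall fun t ht => (hf t ht).deriv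

theorem aestronglyMeasurable_apply_of_hasDerivAt_diagonal_mulVec_add {ι : Type*} [Fintype ι]
    [DecidableEq ι] {R I : ℝ → ι → ℝ} {δ : ι → ℝ} {M : Matrix ι ι ℝ} {s : Set ℝ}
    {μ : Measure ℝ} (hs : MeasurableSet s)
    (hR : ∀ t ∈ s, HasDerivAt R (diagonal δ *ᵥ I t + M *ᵥ R t) t) {i : ι} (hδ : δ i ≠ 0) :
    AEStronglyMeasurable (fun t => I t i) (μ.restrict s) := by
  have hRcont : ContinuousOn R s := fun t ht => (hR t ht).continuousAt.continuousWithinAt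
  have hMR : AEStronglyMeasurable (fun t => M *ᵥ R t) (μ.restrict s) :=
    ((continuous_const.matrix_mulVec continuous_id).comp_continuousOn hRcont).aestronglyMeasurable
      hs
  have hsource : AEStronglyMeasurable (fun t => diagonal δ *ᵥ I t) (μ.restrict s) := by
    refine ((aestronglyMeasurable_of_hasDerivAt hs hR).sub hMR).congr ?_
    exact .of_forall fun t => add_sub_cancel_right _ _
  refine ((continuous_apply i).comp_aestronglyMeasurable hsource).const_mul (δ i)⁻¹ |>.congr ?_
  refine .of_forall fun t => ?_
  simp [mulVec_diagonal, inv_mul_cancel_left₀ hδ]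

theorem integrableOn_Ici_const_mul_exp_neg_mul (κ : ℝ) {c : ℝ} (hc : 0 < c) (a : ℝ) :
    IntegrableOn (fun t => κ * exp (-c * t)) (Ici a) :=
  (integrableOn_Ici_iff_integrableOn_Ioi).2 <|
    (integrableOn_exp_mul_Ioi (neg_neg_of_pos hc) a).const_mul κ

theorem integral_Ici_const_mul_exp_neg_mul (κ : ℝ) {c : ℝ} (hc : 0 < c) (a : ℝ) :
    ∫ t in Ici a, κ * exp (-c * t) = κ * exp (-c * a) / c := by
  rw [integral_Ici_eq_integral_Ioi, integral_const_mul,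
    integral_exp_mul_Ioi (neg_neg_of_pos hc)]
  ring

section ExpBound

variable {f : ℝ → ℝ} {κ c a : ℝ}

theorem integrableOn_Ici_of_le_exp (hc : 0 < c)
    (hf : AEStronglyMeasurable f (volume.restrict (Ici a)))
    (hf0 : ∀ t ∈ Ici a, 0 ≤ f t) (hfle : ∀ t ∈ Ici a, f t ≤ κ * exp (-c * t)) :
    IntegrableOn f (Ici a) :=
  (integrableOn_Ici_const_mul_exp_neg_mul κ hc a).mono' hf <|
    (ae_restrict_iff' measurableSet_Ici).2 <| .of_forall fun t ht => by
      rw [Real.norm_of_nonneg (hf0 t ht)]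
      exact hfle t ht

theorem integral_Ici_le_of_le_exp (hc : 0 < c) (hf : IntegrableOn f (Ici a))
    (hfle : ∀ t ∈ Ici a, f t ≤ κ * exp (-c * t)) :
    ∫ t in Ici a, f t ≤ κ * exp (-c * a) / c :=
  integral_Ici_const_mul_exp_neg_mul κ hc a ▸
    setIntegral_mono_on hf (integrableOn_Ici_const_mul_exp_neg_mul κ hc a) measurableSet_Ici hfle

end ExpBound

theorem final_size_estimate_general {n : Type*} [Fintype n] [DecidableEq n]
    (M : Matrix n n ℝ) (hcol : ∀ j, ∑ i, M i j = 0)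
    (δv : n → ℝ) (hδ : ∀ i, 0 < δv i)
    (lam κ : ℝ) (hlam : 0 < lam)
    (I R : ℝ → n → ℝ)
    (hR : ∀ t : ℝ, 0 ≤ t →
      HasDerivAt R ((Matrix.diagonal δv).mulVec (I t) + M.mulVec (R t)) t)
    (hI0 : ∀ t : ℝ, 0 ≤ t → ∀ i, 0 ≤ I t i)
    (hIb : ∀ t : ℝ, 0 ≤ t → ∀ i, I t i ≤ κ * Real.exp (-lam * t))
    (Rinf : n → ℝ) (hconv : Tendsto R atTop (nhds Rinf)) :
    (∀ i, IntegrableOn (fun t => I t i) (Set.Ici (0:ℝ))) ∧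
    (∑ i, Rinf i = ∑ i, R 0 i + ∑ i, δv i * ∫ t in Set.Ici (0:ℝ), I t i) ∧
    ∑ i, Rinf i ≤ ∑ i, R 0 i + κ / lam * ∑ i, δv i := by
  have hint (i : n) : IntegrableOn (fun t => I t i) (Ici 0) :=
    integrableOn_Ici_of_le_exp hlam
      (aestronglyMeasurable_apply_of_hasDerivAt_diagonal_mulVec_add measurableSet_Ici hR
        (hδ i).ne') (hI0 · · i) (hIb · · i)
  have hmass (t : ℝ) (ht : t ∈ Ici 0) :
      HasDerivAt (fun s => ∑ i, R s i) (∑ i, δv i * I t i) t := by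
    simpa [mulVec_diagonal] using (hR t ht).sum_apply_of_add_mulVec hcol
  have hflux_int : IntegrableOn (fun t => ∑ i, δv i * I t i) (Ioi 0) :=
    integrable_finsetSum _ fun i _ => ((hint i).mono_set Ioi_subset_Ici_self).const_mul _
  have hflux : ∫ t in Ioi 0, ∑ i, δv i * I t i = ∑ i, δv i * ∫ t in Ici 0, I t i := by
    rw [integral_finsetSum _ fun i _ => ((hint i).mono_set Ioi_subset_Ici_self).const_mul _]
    simp only [integral_const_mul, integral_Ici_eq_integral_Ioi]
  have hmass_lim : Tendsto (fun t => ∑ i, R t i) atTop (nhds (∑ i, Rinf i)) :=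
    tendsto_finsetSum _ fun i _ => ((continuous_apply i).tendsto _).comp hconv
  have hbalance : ∑ i, Rinf i = ∑ i, R 0 i + ∑ i, δv i * ∫ t in Ici 0, I t i := by
    rw [← hflux, integral_Ioi_of_hasDerivAt_of_tendsto' hmass hflux_int hmass_lim]
    ring
  refine ⟨hint, hbalance, ?_⟩
  rw [hbalance, Finset.mul_sum]
  gcongr ∑ _, _ + ∑ i, ?_ with i
  rw [mul_comm (κ / lam)]
  exact mul_le_mul_of_nonneg_left
    (by simpa using integral_Ici_le_of_le_exp hlam (hint i) (hIb · · i)) (hδ i).le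

/-- final size bookkeeping: with `R' = δ I + M R`, `I ≥ 0` decaying
exponentially, and `R(t) → R(∞)`, each `Iₙ` is integrable on `[0, ∞)`,
`Σₙ Rₙ(∞) = Σₙ Rₙ(0) + Σₙ δₙ ∫₀^∞ Iₙ`, and `Σₙ Rₙ(∞) ≤ Σₙ Rₙ(0) + (κ/λ) Σₙ δₙ`. -/
theorem final_size_estimate {n : Type*} [Fintype n] [DecidableEq n]
    (M : Matrix n n ℝ) (hcol : ∀ j, ∑ i, M i j = 0)
    (δv : n → ℝ) (hδ : ∀ i, 0 < δv i)
    (lam κ : ℝ) (hlam : 0 < lam) (hκ : 0 ≤ κ)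
    (I R : ℝ → n → ℝ)
    (hR : ∀ t : ℝ, 0 ≤ t →
      HasDerivAt R ((Matrix.diagonal δv).mulVec (I t) + M.mulVec (R t)) t)
    (hI0 : ∀ t : ℝ, 0 ≤ t → ∀ i, 0 ≤ I t i)
    (hIb : ∀ t : ℝ, 0 ≤ t → ∀ i, I t i ≤ κ * Real.exp (-lam * t))
    (Rinf : n → ℝ) (hconv : Tendsto R atTop (nhds Rinf)) :
    (∀ i, IntegrableOn (fun t => I t i) (Set.Ici (0:ℝ))) ∧
    (∑ i, Rinf i = ∑ i, R 0 i + ∑ i, δv i * ∫ t in Set.Ici (0:ℝ), I t i) ∧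
    ∑ i, Rinf i ≤ ∑ i, R 0 i + κ / lam * ∑ i, δv i :=
  final_size_estimate_general M hcol δv hδ lam κ hlam I R hR hI0 hIb Rinf hconv
end

section
/- Let F be an n×n real matrix with all entries nonnegative, and let V be an n×n Metzler real matrix all of whose complex eigenvalues have strictly negative real part (so V is invertible). Then the spectral radius of −F·V⁻¹ is strictly less than 1 if and only if every complex eigenvalue of F + V has strictly negative real part. -/
/-!
Put `W = -V` and `T = -F V⁻¹ = F W⁻¹`, an entrywise nonnegative matrix, so that
`-(F + V) = W - F = (1 - T) W`. Call a matrix inverse-nonnegative if it is invertible with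
entrywise nonnegative inverse. A Metzler matrix `M` is stable iff `-M` is inverse-nonnegative, and
a nonnegative matrix `T` has `ρ(T) < 1` iff `1 - T` is inverse-nonnegative; the factorization
moves inverse-nonnegativity between `1 - T` and `W - F`.

Shifting a Metzler matrix by a multiple of the identity makes it nonnegative, so both
characterizations come down to a nonnegative `B` and a real `s`. If `(s - B)⁻¹ ≥ 0`, the moduli
`|v|` of an eigenvector for `z` satisfy `|z| |v| ≤ B |v|`, which forces `|z| < s`. Conversely,
`(r - B)⁻¹ ≥ 0` holds for large `r` by the Neumann series, survives small decreases of `r` by the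
Neumann series around the current resolvent, and is a closed condition on the real interval where
`r - B` stays invertible; when all eigenvalues have real part `< s`, continuous induction carries
it down to `r = s`.
-/

open Matrix

/-- The spectral radius of a real matrix: the maximum modulus of the eigenvalues of its
complexification. -/
noncomputable def specRad {n : Type*} [Fintype n] [DecidableEq n] (A : Matrix n n ℝ) : ℝ :=
  sSup ((fun z : ℂ => ‖z‖) '' spectrum ℂ (A.map (algebraMap ℝ ℂ)))

namespace Matrix

theorem inv_neg {n R : Type*} [Fintype n] [DecidableEq n] [CommRing R] (A : Matrix n n R) :
    (-A)⁻¹ = -A⁻¹ := by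
  by_cases h : IsUnit A.det
  · exact inv_eq_right_inv (by rw [neg_mul_neg, mul_nonsing_inv _ h])
  · have h' : ¬IsUnit (-A).det := by
      rwa [det_neg, IsUnit.mul_iff, and_iff_right (isUnit_neg_one.pow _)]
    rw [nonsing_inv_apply_not_isUnit _ h, nonsing_inv_apply_not_isUnit _ h', neg_zero]

theorem isUnit_det_smul_one_sub_iff {n R : Type*} [Fintype n] [DecidableEq n] [CommRing R]
    {A : Matrix n n R} {r : R} : IsUnit (r • 1 - A).det ↔ r ∉ spectrum R A := by
  rw [spectrum.notMem_iff, Algebra.algebraMap_eq_smul_one, isUnit_iff_isUnit_det]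

section OrderedRing

variable {l m n R : Type*} [CommRing R] [PartialOrder R] [IsOrderedRing R]

theorem mul_apply_nonneg [Fintype m] {A : Matrix l m R} {B : Matrix m n R}
    (hA : ∀ i j, 0 ≤ A i j) (hB : ∀ i j, 0 ≤ B i j) (i : l) (j : n) : 0 ≤ (A * B) i j :=
  Finset.sum_nonneg fun k _ => mul_nonneg (hA i k) (hB k j)

theorem mulVec_nonneg [Fintype n] {A : Matrix m n R} (hA : ∀ i j, 0 ≤ A i j) {v : n → R}
    (hv : 0 ≤ v) : 0 ≤ A *ᵥ v :=
  fun i => Finset.sum_nonneg fun j _ => mul_nonneg (hA i j) (hv j)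

variable [Fintype n] [DecidableEq n] {A B F W : Matrix n n R}

def IsInvNonneg (A : Matrix n n R) : Prop :=
  IsUnit A.det ∧ ∀ i j, 0 ≤ A⁻¹ i j

theorem IsInvNonneg.mul (hA : A.IsInvNonneg) (hB : B.IsInvNonneg) : (A * B).IsInvNonneg := by
  refine ⟨by rw [det_mul]; exact hA.1.mul hB.1, ?_⟩
  rw [mul_inv_rev]
  exact mul_apply_nonneg hB.2 hA.2

theorem IsInvNonneg.eq_zero_of_mulVec_nonpos (hA : A.IsInvNonneg) {w : n → R} (hw : 0 ≤ w)
    (hAw : A *ᵥ w ≤ 0) : w = 0 := by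
  have hw_eq : w = -(A⁻¹ *ᵥ -(A *ᵥ w)) := by
    rw [mulVec_neg, neg_neg, mulVec_mulVec, nonsing_inv_mul _ hA.1, one_mulVec]
  refine le_antisymm ?_ hw
  rw [hw_eq, neg_nonpos]
  exact mulVec_nonneg hA.2 (neg_nonneg.2 hAw)

theorem IsInvNonneg.sub_iff_one_sub_mul_inv (hW : W.IsInvNonneg) (hF : ∀ i j, 0 ≤ F i j) :
    (W - F).IsInvNonneg ↔ (1 - F * W⁻¹).IsInvNonneg := by
  have hfac : W - F = (1 - F * W⁻¹) * W := by
    rw [sub_mul, one_mul, Matrix.mul_assoc, nonsing_inv_mul _ hW.1, mul_one]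
  refine ⟨fun hWF => ?_, fun h => hfac ▸ h.mul hW⟩
  have hinv : (1 - F * W⁻¹)⁻¹ = 1 + F * (W - F)⁻¹ := by
    refine inv_eq_right_inv ?_
    calc (1 - F * W⁻¹) * (1 + F * (W - F)⁻¹)
        = (1 - F * W⁻¹) * (W * (W - F)⁻¹) := by
          rw [← mul_nonsing_inv (W - F) hWF.1, ← add_mul, sub_add_cancel]
      _ = 1 := by rw [← Matrix.mul_assoc, ← hfac, mul_nonsing_inv _ hWF.1]
  refine ⟨?_, fun i j => ?_⟩
  · have h := hWF.1
    rw [hfac, det_mul] at h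
    exact isUnit_of_mul_isUnit_left h
  · rw [hinv, add_apply]
    exact add_nonneg (zero_le_one_elem i j) (mul_apply_nonneg hF hWF.2 i j)

end OrderedRing

variable {n : Type*} [Fintype n] [DecidableEq n]

theorem exists_mulVec_eq_smul_of_mem_spectrum {K : Type*} [Field K] {A : Matrix n n K} {z : K}
    (hz : z ∈ spectrum K A) : ∃ v ≠ 0, A *ᵥ v = z • v := by
  rw [← spectrum_toLin', ← Module.End.hasEigenvalue_iff_mem_spectrum] at hz
  obtain ⟨v, hv⟩ := hz.exists_hasEigenvector
  exact ⟨v, hv.2, by simpa using hv.apply_eq_smul⟩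

theorem ofReal_mem_spectrum_map {B : Matrix n n ℝ} {r : ℝ} (hr : r ∈ spectrum ℝ B) :
    (r : ℂ) ∈ spectrum ℂ (B.map (algebraMap ℝ ℂ)) := by
  rw [mem_spectrum_iff_isRoot_charpoly] at hr ⊢
  rw [charpoly_map]
  exact hr.map

theorem exists_nonneg_norm_smul_le_mulVec {B : Matrix n n ℝ} (hB : ∀ i j, 0 ≤ B i j) {z : ℂ}
    (hz : z ∈ spectrum ℂ (B.map (algebraMap ℝ ℂ))) :
    ∃ w : n → ℝ, 0 ≤ w ∧ w ≠ 0 ∧ ‖z‖ • w ≤ B *ᵥ w := by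
  obtain ⟨v, hv0, hv⟩ := exists_mulVec_eq_smul_of_mem_spectrum hz
  refine ⟨fun i => ‖v i‖, fun i => norm_nonneg _, fun h => hv0 ?_, fun i => ?_⟩
  · ext i
    simpa using congrFun h i
  · calc ‖z‖ * ‖v i‖ = ‖∑ j, (B i j : ℂ) * v j‖ := by
          rw [← norm_mul, ← smul_eq_mul, ← Pi.smul_apply, ← hv]
          rfl
      _ ≤ ∑ j, B i j * ‖v j‖ := by
          refine (norm_sum_le _ _).trans_eq (Finset.sum_congr rfl fun j _ => ?_)
          rw [norm_mul, Complex.norm_real, Real.norm_of_nonneg (hB i j)]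

theorem norm_lt_of_isInvNonneg_smul_one_sub {B : Matrix n n ℝ} (hB : ∀ i j, 0 ≤ B i j) {s : ℝ}
    (hs : (s • 1 - B).IsInvNonneg) {z : ℂ} (hz : z ∈ spectrum ℂ (B.map (algebraMap ℝ ℂ))) :
    ‖z‖ < s := by
  obtain ⟨w, hw, hw0, hzw⟩ := exists_nonneg_norm_smul_le_mulVec hB hz
  by_contra! h
  refine hw0 (hs.eq_zero_of_mulVec_nonpos hw ?_)
  rw [sub_mulVec, smul_mulVec, one_mulVec, sub_nonpos]
  exact (smul_le_smul_of_nonneg_right h hw).trans hzw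

theorem IsInvNonneg.smul {A : Matrix n n ℝ} (hA : A.IsInvNonneg) {c : ℝ} (hc : 0 < c) :
    (c • A).IsInvNonneg := by
  have h : (c • A) * (c⁻¹ • A⁻¹) = 1 := by
    rw [Matrix.smul_mul, Matrix.mul_smul, smul_smul, mul_inv_cancel₀ hc.ne',
      mul_nonsing_inv _ hA.1, one_smul]
  refine ⟨isUnit_det_of_right_inverse h, fun i j => ?_⟩
  rw [inv_eq_right_inv h]
  exact mul_nonneg (inv_nonneg.2 hc.le) (hA.2 i j)

theorem continuousOn_inv_smul_one_sub (B : Matrix n n ℝ) {S : Set ℝ}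
    (hS : ∀ r ∈ S, r ∉ spectrum ℝ B) : ContinuousOn (fun r : ℝ => (r • 1 - B)⁻¹) S := by
  intro r hr
  refine (continuousAt_matrix_inv _ ?_).comp_continuousWithinAt
    ((continuous_id.smul continuous_const).sub continuous_const).continuousWithinAt
  rw [Ring.inverse_eq_inv']
  exact continuousAt_inv₀ (isUnit_det_smul_one_sub_iff.2 (hS r hr)).ne_zero

section LinftyOpNorm

attribute [local instance] Matrix.linftyOpNormedAddCommGroup Matrix.linftyOpNormedRing
  Matrix.linftyOpNormedAlgebra

theorem isInvNonneg_one_sub_of_norm_lt_one {X : Matrix n n ℝ} (hX : ∀ i j, 0 ≤ X i j)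
    (h : ‖X‖ < 1) : (1 - X).IsInvNonneg := by
  have hsum : Summable fun k : ℕ => X ^ k := summable_geometric_of_norm_lt_one h
  refine ⟨isUnit_det_of_right_inverse (mul_neg_geom_series X h), fun i j => ?_⟩
  rw [inv_eq_right_inv (mul_neg_geom_series X h)]
  exact (hsum.hasSum.map (entryAddMonoidHom ℝ i j) (continuous_id.matrix_elem i j)).nonneg
    fun k => pow_apply_nonneg hX k i j

theorem isInvNonneg_smul_one_sub_of_norm_lt {B : Matrix n n ℝ} (hB : ∀ i j, 0 ≤ B i j) {r : ℝ}
    (h : ‖B‖ < r) : (r • 1 - B).IsInvNonneg := by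
  have hr : 0 < r := (norm_nonneg B).trans_lt h
  have hfac : r • 1 - B = r • (1 - r⁻¹ • B) := by
    rw [smul_sub, smul_smul, mul_inv_cancel₀ hr.ne', one_smul]
  rw [hfac]
  refine (isInvNonneg_one_sub_of_norm_lt_one (fun i j => ?_) ?_).smul hr
  · exact mul_nonneg (inv_nonneg.2 hr.le) (hB i j)
  · rwa [norm_smul, norm_inv, Real.norm_of_nonneg hr.le, inv_mul_lt_iff₀ hr, mul_one]

theorem IsInvNonneg.sub_smul_one {A : Matrix n n ℝ} (hA : A.IsInvNonneg) {c : ℝ} (hc : 0 ≤ c)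
    (h : c * ‖A⁻¹‖ < 1) : (A - c • 1).IsInvNonneg := by
  have hfac : A - c • 1 = A * (1 - c • A⁻¹) := by
    rw [mul_sub, mul_one, Matrix.mul_smul, mul_nonsing_inv _ hA.1]
  rw [hfac]
  refine hA.mul (isInvNonneg_one_sub_of_norm_lt_one (fun i j => mul_nonneg hc (hA.2 i j)) ?_)
  rwa [norm_smul, Real.norm_of_nonneg hc]

theorem isInvNonneg_smul_one_sub_of_notMem_spectrum {B : Matrix n n ℝ} (hB : ∀ i j, 0 ≤ B i j)
    {s : ℝ} (h : ∀ r, s ≤ r → r ∉ spectrum ℝ B) : (s • 1 - B).IsInvNonneg := by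
  set G := {r : ℝ | (r • 1 - B).IsInvNonneg}
  set b := max s (‖B‖ + 1)
  have hclosed : IsClosed (G ∩ Set.Icc s b) := by
    have hG : G ∩ Set.Icc s b =
        Set.Icc s b ∩ (fun r => (r • 1 - B)⁻¹) ⁻¹' {M | ∀ i j, 0 ≤ M i j} := by
      ext r
      exact ⟨fun hr => ⟨hr.2, hr.1.2⟩,
        fun hr => ⟨⟨isUnit_det_smul_one_sub_iff.2 (h r hr.1.1), hr.2⟩, hr.1⟩⟩
    rw [hG]
    refine (continuousOn_inv_smul_one_sub B fun r hr => h r hr.1).preimage_isClosed_of_isClosed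
      isClosed_Icc ?_
    simp only [Set.ofPred_forall]
    exact isClosed_iInter fun i => isClosed_iInter fun j =>
      isClosed_le continuous_const (continuous_id.matrix_elem i j)
  refine hclosed.mem_of_ge_of_forall_exists_lt
    (isInvNonneg_smul_one_sub_of_norm_lt hB ((lt_add_one _).trans_le (le_max_right _ _)))
    (le_max_left _ _) ?_
  rintro x ⟨hx, hsx, -⟩
  set K := ‖(x • 1 - B)⁻¹‖
  have hK : (K + 1)⁻¹ * K < 1 := by
    rw [inv_mul_lt_iff₀ (by positivity)]
    linarith
  set y := max s (x - (K + 1)⁻¹)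
  have hxy : x - y ≤ (K + 1)⁻¹ := by linarith [le_max_right s (x - (K + 1)⁻¹)]
  have hyx : y < x := max_lt hsx (sub_lt_self x (by positivity))
  refine ⟨y, ?_, le_max_left _ _, hyx⟩
  have hy := hx.sub_smul_one (sub_nonneg.2 hyx.le)
    ((mul_le_mul_of_nonneg_right hxy (norm_nonneg _)).trans_lt hK)
  rwa [sub_right_comm, ← sub_smul, sub_sub_cancel] at hy

end LinftyOpNorm

theorem isInvNonneg_smul_one_sub_of_re_lt {B : Matrix n n ℝ} (hB : ∀ i j, 0 ≤ B i j) {s : ℝ}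
    (h : ∀ z ∈ spectrum ℂ (B.map (algebraMap ℝ ℂ)), z.re < s) : (s • 1 - B).IsInvNonneg :=
  isInvNonneg_smul_one_sub_of_notMem_spectrum hB fun r hr hrB =>
    (h _ (ofReal_mem_spectrum_map hrB)).not_ge (by simpa using hr)

theorem IsMetzler.exists_nonneg_add_smul_one {M : Matrix n n ℝ} (hM : M.IsMetzler) :
    ∃ c : ℝ, ∀ i j, 0 ≤ (M + c • 1) i j := by
  refine ⟨∑ k, |M k k|, fun i j => ?_⟩
  rcases eq_or_ne i j with rfl | hij
  · have : |M i i| ≤ ∑ k, |M k k| :=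
      Finset.single_le_sum (fun k _ => abs_nonneg (M k k)) (Finset.mem_univ i)
    simp only [add_apply, smul_apply, one_apply_eq, smul_eq_mul, mul_one]
    linarith [neg_abs_le (M i i)]
  · simpa [one_apply_ne hij] using hM i j hij

theorem IsMetzler.isInvNonneg_neg_iff {M : Matrix n n ℝ} (hM : M.IsMetzler) :
    (-M).IsInvNonneg ↔ ∀ z ∈ spectrum ℂ (M.map (algebraMap ℝ ℂ)), z.re < 0 := by
  obtain ⟨c, hc⟩ := hM.exists_nonneg_add_smul_one
  have hshift (z : ℂ) : z + c ∈ spectrum ℂ ((M + c • 1).map (algebraMap ℝ ℂ)) ↔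
      z ∈ spectrum ℂ (M.map (algebraMap ℝ ℂ)) := by
    have : (M + c • 1).map (algebraMap ℝ ℂ) =
        algebraMap ℂ _ (c : ℂ) + M.map (algebraMap ℝ ℂ) := by
      ext i j
      rcases eq_or_ne i j with rfl | hij <;> simp [algebraMap_matrix_apply, *, add_comm]
    rw [this, spectrum.add_mem_add_iff]
  rw [show -M = c • 1 - (M + c • 1) by abel]
  constructor
  · intro h z hz
    have h1 := norm_lt_of_isInvNonneg_smul_one_sub hc h ((hshift z).2 hz)
    have h2 := (z + c).re_le_norm
    simp only [Complex.add_re, Complex.ofReal_re] at h2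
    linarith
  · intro h
    refine isInvNonneg_smul_one_sub_of_re_lt hc fun z hz => ?_
    have := h (z - c) ((hshift _).1 (by rwa [sub_add_cancel]))
    simp only [Complex.sub_re, Complex.ofReal_re] at this
    linarith

end Matrix

theorem specRad_lt_iff {n : Type*} [Fintype n] [DecidableEq n] {A : Matrix n n ℝ} {s : ℝ}
    (hs : 0 < s) : specRad A < s ↔ ∀ z ∈ spectrum ℂ (A.map (algebraMap ℝ ℂ)), ‖z‖ < s := by
  rcases (spectrum ℂ (A.map (algebraMap ℝ ℂ))).eq_empty_or_nonempty with h | h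
  · rw [specRad, h, Set.image_empty, Real.sSup_empty]
    simp [hs]
  · rw [specRad, ((finite_spectrum _).image _).csSup_lt_iff (h.image _), Set.forall_mem_image]

theorem specRad_lt_one_iff_isInvNonneg_one_sub {n : Type*} [Fintype n] [DecidableEq n]
    {T : Matrix n n ℝ} (hT : ∀ i j, 0 ≤ T i j) : specRad T < 1 ↔ (1 - T).IsInvNonneg := by
  rw [specRad_lt_iff one_pos, ← one_smul ℝ (1 : Matrix n n ℝ)]
  exact ⟨fun h => isInvNonneg_smul_one_sub_of_re_lt hT fun z hz => z.re_le_norm.trans_lt (h z hz),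
    fun h z hz => norm_lt_of_isInvNonneg_smul_one_sub hT h hz⟩

/-- next-generation method: for `F` entrywise nonnegative and `V` Metzler
with all eigenvalues of strictly negative real part, the spectral radius of `-F V⁻¹` is `< 1`
iff every eigenvalue of `F + V` has strictly negative real part. -/
theorem specRad_lt_one_iff_stable {n : Type*} [Fintype n] [DecidableEq n]
    (F V : Matrix n n ℝ) (hF : ∀ i j, 0 ≤ F i j) (hV : V.IsMetzler)
    (hVspec : ∀ z ∈ spectrum ℂ (V.map (algebraMap ℝ ℂ)), z.re < 0) :
    specRad (-(F * V⁻¹)) < 1 ↔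
      ∀ z ∈ spectrum ℂ ((F + V).map (algebraMap ℝ ℂ)), z.re < 0 := by
  have hW : (-V).IsInvNonneg := hV.isInvNonneg_neg_iff.2 hVspec
  have hFV : (F + V).IsMetzler := fun i j hij => add_nonneg (hF i j) (hV i j hij)
  have hT : -(F * V⁻¹) = F * (-V)⁻¹ := by rw [Matrix.inv_neg, Matrix.mul_neg]
  calc specRad (-(F * V⁻¹)) < 1 ↔ (1 - F * (-V)⁻¹).IsInvNonneg := by
        rw [hT]
        exact specRad_lt_one_iff_isInvNonneg_one_sub (mul_apply_nonneg hF hW.2)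
    _ ↔ (-V - F).IsInvNonneg := (hW.sub_iff_one_sub_mul_inv hF).symm
    _ ↔ (-(F + V)).IsInvNonneg := by rw [neg_add_rev, sub_eq_add_neg]
    _ ↔ _ := hFV.isInvNonneg_neg_iff
end

section
/- Let M be an n×n Metzler real matrix each of whose columns sums to zero, and let β^P, β^I, γ, δ, α be diagonal n×n real matrices with strictly positive diagonal entries. Then M − δ, M − γ and M − α are invertible, the matrix Id − (β^P)⁻¹·β^I·(M − δ)⁻¹·γ has all entries nonnegative, and consequently, for any entrywise nonnegative vector μ ∈ ℝ^n, the SEPIR next-generation matrix G = β^P·diag(μ)·(Id − (β^P)⁻¹·β^I·(M − δ)⁻¹·γ)·(M − γ)⁻¹·α·(M − α)⁻¹ has all entries nonnegative. -/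
/-!
Let `A = diag d - M`, whose off-diagonal entries are nonpositive and whose column sums are
positive. If `yᵀ A ≥ 0` and `y` is minimal at `k`, then `(yᵀ A)_k ≤ y_k · ∑ᵢ A_ik`, so `y_k ≥ 0`.
Hence `y ↦ yᵀ A` is injective, so `A` is invertible; applied to the rows of `A⁻¹`, for which
`yᵀ A` is a standard basis vector, it shows `A⁻¹ ≥ 0` entrywise. As `(M - diag d)⁻¹ = -A⁻¹`,
the signs in `Id - …` and in `G` cancel in pairs, leaving sums and products of entrywise
nonnegative matrices, i.e. elements of the subsemiring `(Subsemiring.nonneg ℝ).matrix`.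
-/

open Matrix

namespace Matrix

section ZMatrix

variable {K : Type*} [Field K] [LinearOrder K] [IsStrictOrderedRing K]
  {n : Type*} [Fintype n] {A : Matrix n n K}

theorem nonneg_of_vecMul_nonneg (hA : ∀ i j, i ≠ j → A i j ≤ 0)
    (hcol : ∀ j, 0 < ∑ i, A i j) {y : n → K} (hy : ∀ j, 0 ≤ (y ᵥ* A) j) (i : n) : 0 ≤ y i := by
  by_contra! hyi
  obtain ⟨k, -, hk⟩ := Finset.univ.exists_min_image y ⟨i, Finset.mem_univ i⟩
  have hyk : y k < 0 := (hk i (Finset.mem_univ i)).trans_lt hyi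
  have hle : (y ᵥ* A) k ≤ y k * ∑ j, A j k := by
    rw [vecMul, dotProduct, Finset.mul_sum]
    refine Finset.sum_le_sum fun j _ => ?_
    rcases eq_or_ne j k with rfl | hjk
    · rfl
    · exact mul_le_mul_of_nonpos_right (hk j (Finset.mem_univ j)) (hA j k hjk)
  linarith [hy k, mul_neg_of_neg_of_pos hyk (hcol k)]

variable [DecidableEq n]

theorem isUnit_of_offDiag_nonpos_of_sum_col_pos (hA : ∀ i j, i ≠ j → A i j ≤ 0)
    (hcol : ∀ j, 0 < ∑ i, A i j) : IsUnit A := by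
  have hker : ∀ w : n → K, w ᵥ* A = 0 → ∀ i, 0 ≤ w i := fun w hw =>
    nonneg_of_vecMul_nonneg hA hcol (by simp [hw])
  refine vecMul_injective_iff_isUnit.1 fun y z (hyz : y ᵥ* A = z ᵥ* A) => funext fun i => ?_
  have h₁ := hker (y - z) (by rw [sub_vecMul, sub_eq_zero.2 hyz]) i
  have h₂ := hker (z - y) (by rw [sub_vecMul, sub_eq_zero.2 hyz.symm]) i
  simp only [Pi.sub_apply] at h₁ h₂
  linarith

theorem inv_mem_nonneg_matrix_of_offDiag_nonpos_of_sum_col_pos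
    (hA : ∀ i j, i ≠ j → A i j ≤ 0) (hcol : ∀ j, 0 < ∑ i, A i j) :
    A⁻¹ ∈ (Subsemiring.nonneg K).matrix := fun i =>
  nonneg_of_vecMul_nonneg hA hcol fun j => by
    rw [← mul_apply_eq_vecMul, nonsing_inv_mul _ ((isUnit_iff_isUnit_det A).1
      (isUnit_of_offDiag_nonpos_of_sum_col_pos hA hcol))]
    exact (Subsemiring.nonneg K).matrix.one_mem i j

end ZMatrix

theorem inv_neg_of_isUnit {n K : Type*} [Fintype n] [DecidableEq n] [CommRing K]
    {A : Matrix n n K} (hA : IsUnit A) : (-A)⁻¹ = -A⁻¹ :=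
  inv_eq_left_inv <| by rw [neg_mul_neg, nonsing_inv_mul _ ((isUnit_iff_isUnit_det A).1 hA)]

theorem inv_diagonal_mem_nonneg_matrix {K n : Type*} [Field K] [LinearOrder K]
    [IsStrictOrderedRing K] [Fintype n] [DecidableEq n] {v : n → K} (hv : ∀ i, 0 < v i) :
    (diagonal v)⁻¹ ∈ (Subsemiring.nonneg K).matrix :=
  inv_mem_nonneg_matrix_of_offDiag_nonpos_of_sum_col_pos
    (fun _ _ hij => (diagonal_apply_ne v hij).le) fun j => by simpa [diagonal_apply] using hv j

theorem IsMetzler.diagonal_sub_apply_nonpos {n : Type*} [DecidableEq n] {M : Matrix n n ℝ}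
    {d : n → ℝ} (hM : M.IsMetzler) {i j : n} (hij : i ≠ j) : (diagonal d - M) i j ≤ 0 := by
  rw [sub_apply, diagonal_apply_ne _ hij, zero_sub, neg_nonpos]
  exact hM i j hij

section Metzler

variable {n : Type*} [Fintype n] [DecidableEq n] {M : Matrix n n ℝ} {d : n → ℝ}

theorem sum_diagonal_sub_apply_pos (hcol : ∀ j, ∑ i, M i j ≤ 0) (hd : ∀ i, 0 < d i) (j : n) :
    0 < ∑ i, (diagonal d - M) i j := by
  simp only [sub_apply, Finset.sum_sub_distrib, diagonal_apply, Finset.sum_ite_eq',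
    Finset.mem_univ, if_true]
  linarith [hcol j, hd j]

theorem IsMetzler.isUnit_diagonal_sub (hM : M.IsMetzler) (hcol : ∀ j, ∑ i, M i j ≤ 0)
    (hd : ∀ i, 0 < d i) : IsUnit (diagonal d - M) :=
  isUnit_of_offDiag_nonpos_of_sum_col_pos (fun _ _ => hM.diagonal_sub_apply_nonpos)
    (sum_diagonal_sub_apply_pos hcol hd)

theorem IsMetzler.isUnit_sub_diagonal (hM : M.IsMetzler) (hcol : ∀ j, ∑ i, M i j ≤ 0)
    (hd : ∀ i, 0 < d i) : IsUnit (M - diagonal d) := by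
  rw [← neg_sub]
  exact (hM.isUnit_diagonal_sub hcol hd).neg

theorem IsMetzler.inv_diagonal_sub_mem_nonneg_matrix (hM : M.IsMetzler)
    (hcol : ∀ j, ∑ i, M i j ≤ 0) (hd : ∀ i, 0 < d i) :
    (diagonal d - M)⁻¹ ∈ (Subsemiring.nonneg ℝ).matrix :=
  inv_mem_nonneg_matrix_of_offDiag_nonpos_of_sum_col_pos
    (fun _ _ => hM.diagonal_sub_apply_nonpos) (sum_diagonal_sub_apply_pos hcol hd)

theorem IsMetzler.inv_sub_diagonal (hM : M.IsMetzler) (hcol : ∀ j, ∑ i, M i j ≤ 0)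
    (hd : ∀ i, 0 < d i) : (M - diagonal d)⁻¹ = -(diagonal d - M)⁻¹ := by
  rw [← neg_sub, inv_neg_of_isUnit (hM.isUnit_diagonal_sub hcol hd)]

end Metzler

end Matrix

/-- for `M` Metzler with columns summing to zero and diagonal matrices
`βP, βI, γ, δ, α` with positive diagonals, the matrices `M - δ`, `M - γ`, `M - α` are
invertible, `Id - (βP)⁻¹ βI (M - δ)⁻¹ γ` is entrywise nonnegative, and the SEPIR
next-generation matrix `G = βP diag μ (Id - (βP)⁻¹ βI (M - δ)⁻¹ γ) (M - γ)⁻¹ α (M - α)⁻¹`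
is entrywise nonnegative for every entrywise nonnegative `μ`. -/
theorem sepir_nextGeneration_nonneg {n : Type*} [Fintype n] [DecidableEq n]
    (M : Matrix n n ℝ) (hM : M.IsMetzler) (hcol : ∀ j, ∑ i, M i j = 0)
    (βP βI γv δv αv : n → ℝ)
    (hβP : ∀ i, 0 < βP i) (hβI : ∀ i, 0 < βI i) (hγ : ∀ i, 0 < γv i)
    (hδ : ∀ i, 0 < δv i) (hα : ∀ i, 0 < αv i) :
    IsUnit (M - Matrix.diagonal δv) ∧ IsUnit (M - Matrix.diagonal γv) ∧
    IsUnit (M - Matrix.diagonal αv) ∧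
    (∀ i j, 0 ≤ ((1 : Matrix n n ℝ) - (Matrix.diagonal βP)⁻¹ * Matrix.diagonal βI *
      (M - Matrix.diagonal δv)⁻¹ * Matrix.diagonal γv) i j) ∧
    ∀ μ : n → ℝ, (∀ i, 0 ≤ μ i) →
      ∀ i j, 0 ≤ (Matrix.diagonal βP * Matrix.diagonal μ *
        ((1 : Matrix n n ℝ) - (Matrix.diagonal βP)⁻¹ * Matrix.diagonal βI *
          (M - Matrix.diagonal δv)⁻¹ * Matrix.diagonal γv) *
        (M - Matrix.diagonal γv)⁻¹ * Matrix.diagonal αv * (M - Matrix.diagonal αv)⁻¹) i j := by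
  have hcol' : ∀ j, ∑ i, M i j ≤ 0 := fun j => (hcol j).le
  have diag_mem {v : n → ℝ} (hv : ∀ i, 0 ≤ v i) : diagonal v ∈ (Subsemiring.nonneg ℝ).matrix :=
    (diagonal_mem_matrix_iff (zero_mem _)).2 hv
  have hPδ := hM.inv_diagonal_sub_mem_nonneg_matrix hcol' hδ
  have hPγ := hM.inv_diagonal_sub_mem_nonneg_matrix hcol' hγ
  have hPα := hM.inv_diagonal_sub_mem_nonneg_matrix hcol' hα
  have hN : (1 : Matrix n n ℝ) - (diagonal βP)⁻¹ * diagonal βI * (M - diagonal δv)⁻¹ *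
      diagonal γv ∈ (Subsemiring.nonneg ℝ).matrix := by
    rw [hM.inv_sub_diagonal hcol' hδ, mul_neg, neg_mul, sub_neg_eq_add]
    refine add_mem (one_mem _) (mul_mem (mul_mem (mul_mem ?_ ?_) hPδ) ?_)
    exacts [inv_diagonal_mem_nonneg_matrix hβP, diag_mem fun i => (hβI i).le,
      diag_mem fun i => (hγ i).le]
  refine ⟨hM.isUnit_sub_diagonal hcol' hδ, hM.isUnit_sub_diagonal hcol' hγ,
    hM.isUnit_sub_diagonal hcol' hα, hN, fun μ hμ => ?_⟩
  rw [hM.inv_sub_diagonal hcol' hγ, hM.inv_sub_diagonal hcol' hα]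
  simp only [mul_neg, neg_mul, neg_neg]
  refine mul_mem (mul_mem (mul_mem (mul_mem (mul_mem ?_ (diag_mem hμ)) hN) hPγ) ?_) hPα
  exacts [diag_mem fun i => (hβP i).le, diag_mem fun i => (hα i).le]
end
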